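/- arXiv:math/0512301 — 12 statements merged into one kernel-verified Lean document; each statement's English description precedes it below -/
import Mathlib

section
/- Let X be a real-valued random variable with E X = 0, Var X ≤ σ², and X ≤ d almost surely, where σ > 0 and d > 0 are constants. Set a := σ²/d², and let X_a be a random variable taking the values -a and 1 with probabilities 1/(1+a) and a/(1+a), respectively. Then for every t ∈ ℝ, E (X - t)₊² ≤ E (d·X_a - t)₊². -/
/-!
Fix `t`. On `(-∞, d]` the function `x ↦ (x - t)₊²` is dominated by the square of an affine
function `c x + e` which coincides with it at the two atoms `-d a` and `d` of `d X_a`: zero if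
`d ≤ t`, `(x - t)²` if `t < -d a`, and otherwise the square of the chord of `(x - t)₊` over
`[-d a, d]`. Since `E (c X + e)² = c² Var X + e²` only sees the first two moments, it is at most
`c² σ² + e² = E (c d X_a + e)² = E (d X_a - t)₊²`.
-/

open MeasureTheory ProbabilityTheory

section

variable {Ω : Type*} [MeasurableSpace Ω] {μ : Measure Ω} [IsProbabilityMeasure μ]

theorem integral_sq_const_mul_add {X : Ω → ℝ} (hX : MemLp X 2 μ) (c e : ℝ) :
    ∫ ω, (c * X ω + e) ^ 2 ∂μ = c ^ 2 * variance X μ + (c * μ[X] + e) ^ 2 := by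
  have hY : MemLp (fun ω => c * X ω + e) 2 μ := (hX.const_mul c).add (memLp_const e)
  have hmeanY : ∫ ω, (c * X ω + e) ∂μ = c * μ[X] + e := by
    rw [integral_add ((hX.integrable one_le_two).const_mul c) (integrable_const e),
      integral_const_mul]
    simp
  have hvarY := variance_eq_sub hY
  rw [variance_add_const (hX.aestronglyMeasurable.const_mul c), variance_const_mul] at hvarY
  rw [hvarY, hmeanY]
  simp [Pi.pow_apply]

theorem integral_comp_of_measure_add_eq_one {α E : Type*}
    [MeasurableSpace α] [MeasurableSingletonClass α]
    [NormedAddCommGroup E] [NormedSpace ℝ E] [CompleteSpace E]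
    {X : Ω → α} (hX : Measurable X) {u v : α} (huv : u ≠ v)
    (h : μ {ω | X ω = u} + μ {ω | X ω = v} = 1) (F : α → E) :
    ∫ ω, F (X ω) ∂μ = μ.real {ω | X ω = u} • F u + μ.real {ω | X ω = v} • F v := by
  have hu : MeasurableSet {ω | X ω = u} := hX (measurableSet_singleton u)
  have hv : MeasurableSet {ω | X ω = v} := hX (measurableSet_singleton v)
  have hdisj : Disjoint {ω | X ω = u} {ω | X ω = v} :=
    Set.disjoint_left.2 fun ω hωu hωv => huv (hωu.symm.trans hωv)
  have hae : ∀ᵐ ω ∂μ, X ω = u ∨ X ω = v := by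
    change {ω | X ω = u} ∪ {ω | X ω = v} ∈ ae μ
    rw [mem_ae_iff, prob_compl_eq_zero_iff (hu.union hv), measure_union hdisj hv, h]
  have hF : (fun ω => F (X ω)) =ᵐ[μ]
      {ω | X ω = u}.indicator (fun _ => F u) + {ω | X ω = v}.indicator (fun _ => F v) := by
    filter_upwards [hae] with ω hω
    rcases hω with hω | hω <;> simp [hω, huv, huv.symm]
  rw [integral_congr_ae hF, integral_add' ((integrable_const _).indicator hu)
    ((integrable_const _).indicator hv), integral_indicator_const _ hu,
    integral_indicator_const _ hv]

end

theorem sq_max_sub_zero_le_chord {lo hi t x : ℝ} (hlo : lo ≤ t) (hlohi : lo < hi) (hx : x ≤ hi) :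
    max (x - t) 0 ^ 2 ≤ ((hi - t) / (hi - lo) * (x - lo)) ^ 2 := by
  rcases le_or_gt x t with hxt | htx
  · rw [max_eq_right (by linarith)]
    simpa using sq_nonneg _
  · rw [max_eq_left (by linarith)]
    have hchord : x - t ≤ (hi - t) / (hi - lo) * (x - lo) := by
      rw [div_mul_eq_mul_div, le_div_iff₀ (by linarith)]
      nlinarith [mul_nonneg (sub_nonneg.2 hx) (sub_nonneg.2 hlo)]
    exact pow_le_pow_left₀ (by linarith) hchord 2

theorem exists_sq_affine_majorant {a d : ℝ} (ha : 0 ≤ a) (hd : 0 < d) (t : ℝ) :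
    ∃ c e : ℝ, (∀ x ≤ d, max (x - t) 0 ^ 2 ≤ (c * x + e) ^ 2) ∧
      c ^ 2 * (a * d ^ 2) + e ^ 2 =
        1 / (1 + a) * max (d * -a - t) 0 ^ 2 + a / (1 + a) * max (d * 1 - t) 0 ^ 2 := by
  rcases le_or_gt d t with hdt | htd
  · refine ⟨0, 0, fun x hx => ?_, ?_⟩
    · rw [max_eq_right (by linarith)]
      simp
    · rw [max_eq_right (by nlinarith), max_eq_right (by linarith)]
      simp
  rcases le_or_gt (d * -a) t with hat | hta
  · refine ⟨(d - t) / (d - d * -a), -((d - t) / (d - d * -a) * (d * -a)), fun x hx => ?_, ?_⟩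
    · convert sq_max_sub_zero_le_chord hat (by nlinarith) hx using 2
      ring
    · rw [max_eq_right (by linarith), max_eq_left (by linarith)]
      have h1a : 1 + a ≠ 0 := by positivity
      rw [show d - d * -a = d * (1 + a) by ring]
      field_simp
      ring
  · refine ⟨1, -t, fun x _ => ?_, ?_⟩
    · rw [one_mul, ← sub_eq_add_neg]
      rcases le_total x t with hxt | htx
      · rw [max_eq_right (by linarith)]
        simpa using sq_nonneg _
      · rw [max_eq_left (by linarith)]
    · rw [max_eq_left (by linarith), max_eq_left (by nlinarith)]
      field_simp
      ring

theorem stmt_1_general {Ω : Type*} [MeasurableSpace Ω] (μ : Measure Ω) [IsProbabilityMeasure μ]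
    (X : Ω → ℝ) (hX2 : MemLp X 2 μ)
    (σ d : ℝ) (hd : 0 < d)
    (hmean : ∫ ω, X ω ∂μ = 0) (hvar : ProbabilityTheory.variance X μ ≤ σ ^ 2)
    (hbd : ∀ᵐ ω ∂μ, X ω ≤ d)
    (a : ℝ) (ha : a = σ ^ 2 / d ^ 2)
    {Ω' : Type*} [MeasurableSpace Ω'] (μ' : Measure Ω') [IsProbabilityMeasure μ']
    (Xa : Ω' → ℝ) (hXam : Measurable Xa)
    (hXa1 : μ' {ω' | Xa ω' = -a} = ENNReal.ofReal (1 / (1 + a)))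
    (hXa2 : μ' {ω' | Xa ω' = 1} = ENNReal.ofReal (a / (1 + a))) :
    ∀ t : ℝ,
      ∫ ω, (max (X ω - t) 0) ^ 2 ∂μ ≤ ∫ ω', (max (d * Xa ω' - t) 0) ^ 2 ∂μ' := by
  intro t
  have ha0 : 0 ≤ a := ha ▸ by positivity
  have hσ : σ ^ 2 = a * d ^ 2 := by rw [ha]; field_simp
  have hXa : μ' {ω' | Xa ω' = -a} + μ' {ω' | Xa ω' = 1} = 1 := by
    rw [hXa1, hXa2, ← ENNReal.ofReal_add (by positivity) (by positivity), ← add_div,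
      div_self (by positivity), ENNReal.ofReal_one]
  obtain ⟨c, e, hmaj, hval⟩ := exists_sq_affine_majorant ha0 hd t
  calc ∫ ω, (max (X ω - t) 0) ^ 2 ∂μ
      ≤ ∫ ω, (c * X ω + e) ^ 2 ∂μ :=
        integral_mono_of_nonneg (.of_forall fun _ => sq_nonneg _)
          ((hX2.const_mul c).add (memLp_const e)).integrable_sq (hbd.mono fun ω => hmaj (X ω))
    _ = c ^ 2 * variance X μ + e ^ 2 := by rw [integral_sq_const_mul_add hX2, hmean]; ring
    _ ≤ c ^ 2 * (a * d ^ 2) + e ^ 2 := by rw [← hσ]; gcongr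
    _ = ∫ ω', (max (d * Xa ω' - t) 0) ^ 2 ∂μ' := by
      rw [hval, integral_comp_of_measure_add_eq_one hXam (by linarith) hXa
          (fun y => max (d * y - t) 0 ^ 2), measureReal_def,
        measureReal_def, hXa1, hXa2, ENNReal.toReal_ofReal (by positivity),
        ENNReal.toReal_ofReal (by positivity), smul_eq_mul, smul_eq_mul]

theorem stmt_1 {Ω : Type*} [MeasurableSpace Ω] (μ : Measure Ω) [IsProbabilityMeasure μ]
    (X : Ω → ℝ) (hXm : Measurable X) (hX2 : MemLp X 2 μ)
    (σ d : ℝ) (hσ : 0 < σ) (hd : 0 < d)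
    (hmean : ∫ ω, X ω ∂μ = 0) (hvar : ProbabilityTheory.variance X μ ≤ σ ^ 2)
    (hbd : ∀ᵐ ω ∂μ, X ω ≤ d)
    (a : ℝ) (ha : a = σ ^ 2 / d ^ 2)
    {Ω' : Type*} [MeasurableSpace Ω'] (μ' : Measure Ω') [IsProbabilityMeasure μ']
    (Xa : Ω' → ℝ) (hXam : Measurable Xa)
    (hXa1 : μ' {ω' | Xa ω' = -a} = ENNReal.ofReal (1 / (1 + a)))
    (hXa2 : μ' {ω' | Xa ω' = 1} = ENNReal.ofReal (a / (1 + a))) :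
    ∀ t : ℝ,
      ∫ ω, (max (X ω - t) 0) ^ 2 ∂μ ≤ ∫ ω', (max (d * Xa ω' - t) 0) ^ 2 ∂μ' :=
  stmt_1_general μ X hX2 σ d hd hmean hvar hbd a ha μ' Xa hXam hXa1 hXa2
end

section
/- Let X be a real-valued random variable with E X = 0, E X² ≤ σ², and X ≤ d almost surely, where σ > 0, d > 0. Fix t ∈ ℝ, set a := σ²/d² and t_a := min(t, -a·d) (in units where d = 1, t_a := min(t, -a)). Then, working with d = 1: for all x ≤ 1, (x - t)₊² ≤ ((1-t)₊²/(1-t_a)²)·(x - t_a)², with equality at x = 1 and x = -a. -/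
/-!
The line through `(s, 0)` and `(1, (1 - t)₊)` has slope at most `1` when `s ≤ t`, so on `x ≤ 1`
it lies above `x - t`, and it is nonnegative to the right of `s`; squaring gives the majorization.
Equality at `x = -a` holds because either `t_a = t`, where the quadratic is `(x - t)²`, or
`t_a = -a`, where both sides vanish.
-/

namespace QuadraticMajorant

variable {s t x : ℝ}

theorem sub_le_secant (hst : s ≤ t) (hs : s < 1) (hx : x ≤ 1) (hsx : s ≤ x) :
    x - t ≤ max (1 - t) 0 / (1 - s) * (x - s) := by
  rw [div_mul_eq_mul_div, le_div_iff₀ (sub_pos.2 hs)]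
  calc (x - t) * (1 - s) ≤ (x - t) * (1 - s) + (t - s) * (1 - x) :=
        le_add_of_nonneg_right (mul_nonneg (sub_nonneg.2 hst) (sub_nonneg.2 hx))
    _ = (1 - t) * (x - s) := by ring
    _ ≤ max (1 - t) 0 * (x - s) := mul_le_mul_of_nonneg_right (le_max_left _ _) (sub_nonneg.2 hsx)

theorem posPart_sq_le (hst : s ≤ t) (hs : s < 1) (hx : x ≤ 1) :
    max (x - t) 0 ^ 2 ≤ max (1 - t) 0 ^ 2 / (1 - s) ^ 2 * (x - s) ^ 2 := by
  rcases lt_or_ge x s with hxs | hsx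
  · rw [max_eq_right (by linarith), sq, zero_mul]
    positivity
  · rw [← div_pow, ← mul_pow]
    refine pow_le_pow_left₀ (le_max_right _ _) (max_le (sub_le_secant hst hs hx hsx) ?_) 2
    exact mul_nonneg (div_nonneg (le_max_right _ _) (sub_pos.2 hs).le) (sub_nonneg.2 hsx)

theorem posPart_sq_eq_at_min {p : ℝ} (hp : p < 1) :
    max (p - t) 0 ^ 2 = max (1 - t) 0 ^ 2 / (1 - min t p) ^ 2 * (p - min t p) ^ 2 := by
  rcases le_or_gt t p with htp | hpt
  · have h1t : (1 - t) ^ 2 ≠ 0 := pow_ne_zero 2 (by linarith)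
    rw [min_eq_left htp, max_eq_left (sub_nonneg.2 htp), max_eq_left (by linarith),
      div_self h1t, one_mul]
  · rw [min_eq_right hpt.le, max_eq_right (by linarith)]
    ring

end QuadraticMajorant

open QuadraticMajorant in
theorem stmt_2_general (σ t : ℝ) (a ta : ℝ) (ha : a = σ ^ 2)
    (hta : ta = min t (-a)) :
    (∀ x : ℝ, x ≤ 1 →
      (max (x - t) 0) ^ 2 ≤ (max (1 - t) 0) ^ 2 / (1 - ta) ^ 2 * (x - ta) ^ 2) ∧
    (max (1 - t) 0) ^ 2 = (max (1 - t) 0) ^ 2 / (1 - ta) ^ 2 * (1 - ta) ^ 2 ∧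
    (max (-a - t) 0) ^ 2 = (max (1 - t) 0) ^ 2 / (1 - ta) ^ 2 * (-a - ta) ^ 2 := by
  have hneg_a : -a < 1 := by rw [ha]; linarith [sq_nonneg σ]
  have hta_lt : ta < 1 := hta ▸ (min_le_right t (-a)).trans_lt hneg_a
  refine ⟨fun x hx => posPart_sq_le (hta ▸ min_le_left t (-a)) hta_lt hx, ?_, ?_⟩
  · exact (div_mul_cancel₀ _ (pow_ne_zero 2 (sub_pos.2 hta_lt).ne')).symm
  · exact hta ▸ posPart_sq_eq_at_min hneg_a

theorem stmt_2 (σ t : ℝ) (hσ : 0 < σ) (a ta : ℝ) (ha : a = σ ^ 2)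
    (hta : ta = min t (-a)) :
    (∀ x : ℝ, x ≤ 1 →
      (max (x - t) 0) ^ 2 ≤ (max (1 - t) 0) ^ 2 / (1 - ta) ^ 2 * (x - ta) ^ 2) ∧
    (max (1 - t) 0) ^ 2 = (max (1 - t) 0) ^ 2 / (1 - ta) ^ 2 * (1 - ta) ^ 2 ∧
    (max (-a - t) 0) ^ 2 = (max (1 - t) 0) ^ 2 / (1 - ta) ^ 2 * (-a - ta) ^ 2 :=
  stmt_2_general σ t a ta ha hta
end

section
/- Let X be an integrable real-valued random variable with E X ≤ 0 and X ≤ d a.s. for a constant d > 0. Define γ := (E X)/(E X - d) and X̃ := (1 - γ)X + γd. Then γ ∈ [0, 1), X ≤ X̃ ≤ d a.s., E X̃ = 0, and Var X̃ ≤ Var X. -/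
/-! Writing `m = E X`, the choice of `γ` makes `γ d = -(1 - γ) m`, so `X̃ = (1 - γ)(X - m)` is a
rescaled centring of `X` with factor `1 - γ = d / (d - m) ∈ (0, 1]`. Hence `E X̃ = 0` and
`Var X̃ = (1 - γ)² Var X ≤ Var X`, while `X̃` is a convex combination of `X` and `d ≥ X`. -/

open MeasureTheory ProbabilityTheory

lemma one_sub_mul_add_mul_eq_one_sub_mul_sub {γ m d : ℝ} (h : γ * (m - d) = m) (x : ℝ) :
    (1 - γ) * x + γ * d = (1 - γ) * (x - m) := by
  linear_combination -h

lemma le_one_sub_mul_add_mul {t x d : ℝ} (ht : 0 ≤ t) (hx : x ≤ d) : x ≤ (1 - t) * x + t * d := by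
  nlinarith

lemma one_sub_mul_add_mul_le {t x d : ℝ} (ht : t ≤ 1) (hx : x ≤ d) : (1 - t) * x + t * d ≤ d := by
  nlinarith

section Centring

variable {Ω : Type*} [MeasurableSpace Ω] {μ : Measure Ω} [IsProbabilityMeasure μ] {X : Ω → ℝ}

lemma integral_mul_sub_integral (hX : Integrable X μ) (c : ℝ) :
    ∫ ω, c * (X ω - ∫ ω', X ω' ∂μ) ∂μ = 0 := by
  rw [integral_const_mul, integral_sub hX (integrable_const _), integral_const, probReal_univ,
    one_smul, sub_self, mul_zero]

lemma variance_mul_sub_const (hX : AEStronglyMeasurable X μ) (c a : ℝ) :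
    variance (fun ω => c * (X ω - a)) μ = c ^ 2 * variance X μ := by
  rw [variance_const_mul, variance_sub_const hX]

end Centring

theorem stmt_3_general {Ω : Type*} [MeasurableSpace Ω] (μ : Measure Ω) [IsProbabilityMeasure μ]
    (X : Ω → ℝ) (hX2 : MemLp X 2 μ)
    (d : ℝ) (hd : 0 < d) (hmean : ∫ ω, X ω ∂μ ≤ 0) (hbd : ∀ᵐ ω ∂μ, X ω ≤ d)
    (γ : ℝ) (hγ : γ = (∫ ω, X ω ∂μ) / ((∫ ω, X ω ∂μ) - d))
    (Xt : Ω → ℝ) (hXt : ∀ ω, Xt ω = (1 - γ) * X ω + γ * d) :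
    0 ≤ γ ∧ γ < 1 ∧ (∀ᵐ ω ∂μ, X ω ≤ Xt ω ∧ Xt ω ≤ d) ∧ (∫ ω, Xt ω ∂μ) = 0 ∧
      ProbabilityTheory.variance Xt μ ≤ ProbabilityTheory.variance X μ := by
  set m := ∫ ω, X ω ∂μ
  have hden : m - d < 0 := by linarith
  have hγ0 : 0 ≤ γ := hγ ▸ div_nonneg_of_nonpos hmean hden.le
  have hγ1 : γ < 1 := hγ ▸ (div_lt_one_of_neg hden).2 (by linarith)
  have hXt_centred : Xt = fun ω => (1 - γ) * (X ω - m) := by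
    have hγd : γ * (m - d) = m := hγ ▸ div_mul_cancel₀ m hden.ne
    exact funext fun ω => (hXt ω).trans (one_sub_mul_add_mul_eq_one_sub_mul_sub hγd (X ω))
  refine ⟨hγ0, hγ1, ?_, ?_, ?_⟩
  · filter_upwards [hbd] with ω hω
    rw [hXt]
    exact ⟨le_one_sub_mul_add_mul hγ0 hω, one_sub_mul_add_mul_le hγ1.le hω⟩
  · rw [hXt_centred]
    exact integral_mul_sub_integral (hX2.integrable one_le_two) _
  · rw [hXt_centred, variance_mul_sub_const hX2.aestronglyMeasurable]
    exact mul_le_of_le_one_left (variance_nonneg X μ) (pow_le_one₀ (by linarith) (by linarith))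

theorem stmt_3 {Ω : Type*} [MeasurableSpace Ω] (μ : Measure Ω) [IsProbabilityMeasure μ]
    (X : Ω → ℝ) (hXm : Measurable X) (hX2 : MemLp X 2 μ)
    (d : ℝ) (hd : 0 < d) (hmean : ∫ ω, X ω ∂μ ≤ 0) (hbd : ∀ᵐ ω ∂μ, X ω ≤ d)
    (γ : ℝ) (hγ : γ = (∫ ω, X ω ∂μ) / ((∫ ω, X ω ∂μ) - d))
    (Xt : Ω → ℝ) (hXt : ∀ ω, Xt ω = (1 - γ) * X ω + γ * d) :
    0 ≤ γ ∧ γ < 1 ∧ (∀ᵐ ω ∂μ, X ω ≤ Xt ω ∧ Xt ω ≤ d) ∧ (∫ ω, Xt ω ∂μ) = 0 ∧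
      ProbabilityTheory.variance Xt μ ≤ ProbabilityTheory.variance X μ :=
  stmt_3_general μ X hX2 d hd hmean hbd γ hγ Xt hXt
end

section
/- Let ξ and η be real-valued random variables such that the function u ↦ P(η ≥ u) is log-concave on ℝ, and suppose E (ξ - t)₊² ≤ E (η - t)₊² for all t ∈ ℝ. Then P(ξ ≥ x) ≤ (e²/2)·P(η ≥ x) for all x ∈ ℝ. -/
/-!
Write `G u = P(η ≥ u)`. Where `G` is positive somewhere to the right of `x`, log-concavity gives a
supporting line of `log G` at `x`: `G u ≤ G x * exp (-c * (u - x))` for all `u`. For `c > 0` the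
layer-cake formula turns this into `E (η - t)₊² ≤ 2 G(x) e^{c (x - t)} / c²`, and Markov's
inequality `(x - t)² P(ξ ≥ x) ≤ E (ξ - t)₊²` at `x - t = 2 / c` gives the constant `e² / 2`.
For `c ≤ 0`, `G ≤ G x` on `(-∞, x]` forces `G x = 1`. If instead `η ≤ x` almost surely, Markov's
inequality against `E (η - t)₊² ≤ (x - t)² G(t)` and left-continuity of `G` give
`P(ξ ≥ x) ≤ G(x)`.
-/

open MeasureTheory Set Real Filter Topology

section LogConcave

variable {E : Type*} [AddCommGroup E] [Module ℝ E]

def IsLogConcave (q : E → ℝ) : Prop :=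
  ∀ x y : E, ∀ l ∈ Icc (0 : ℝ) 1, q x ^ (1 - l) * q y ^ l ≤ q ((1 - l) • x + l • y)

theorem IsLogConcave.concaveOn_log {q : E → ℝ} (hq : IsLogConcave q) :
    ConcaveOn ℝ {x | 0 < q x} (fun x => log (q x)) := by
  have key : ∀ ⦃x⦄, 0 < q x → ∀ ⦃y⦄, 0 < q y → ∀ ⦃a b : ℝ⦄, 0 ≤ a → 0 ≤ b → a + b = 1 →
      0 < q x ^ a * q y ^ b ∧ q x ^ a * q y ^ b ≤ q (a • x + b • y) := by
    intro x hx y hy a b ha hb hab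
    obtain rfl : a = 1 - b := by linarith
    exact ⟨by positivity, hq x y b ⟨hb, by linarith⟩⟩
  refine ⟨fun x hx y hy a b ha hb hab => ?_, fun x hx y hy a b ha hb hab => ?_⟩
  · exact (key hx hy ha hb hab).1.trans_le (key hx hy ha hb hab).2
  · calc a • log (q x) + b • log (q y) = log (q x ^ a * q y ^ b) := by
          rw [log_mul (rpow_pos_of_pos hx a).ne' (rpow_pos_of_pos hy b).ne', log_rpow hx,
            log_rpow hy, smul_eq_mul, smul_eq_mul]
      _ ≤ log (q (a • x + b • y)) := log_le_log (key hx hy ha hb hab).1 (key hx hy ha hb hab).2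

end LogConcave

theorem ConvexOn.add_rightDeriv_mul_sub_le {S : Set ℝ} {f : ℝ → ℝ} {x y : ℝ}
    (hf : ConvexOn ℝ S f) (hx : x ∈ interior S) (hy : y ∈ S) :
    f x + derivWithin f (Ioi x) x * (y - x) ≤ f y := by
  rcases lt_trichotomy x y with hxy | rfl | hyx
  · have h := hf.rightDeriv_le_slope_of_mem_interior hx hy hxy
    rw [slope_def_field, le_div_iff₀ (sub_pos.2 hxy)] at h
    linarith
  · simp
  · have h := (hf.slope_le_leftDeriv_of_mem_interior hy hx hyx).trans
      (hf.leftDeriv_le_rightDeriv_of_mem_interior hx)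
    rw [slope_def_field, div_le_iff₀ (sub_pos.2 hyx)] at h
    linarith

theorem ConcaveOn.exists_le_add_mul_sub {S : Set ℝ} {f : ℝ → ℝ} {x : ℝ}
    (hf : ConcaveOn ℝ S f) (hx : x ∈ interior S) : ∃ c, ∀ y ∈ S, f y ≤ f x + c * (y - x) :=
  ⟨-derivWithin (-f) (Ioi x) x, fun y hy => by
    have h := hf.neg.add_rightDeriv_mul_sub_le hx hy
    simp only [Pi.neg_apply] at h
    linarith⟩

theorem IsLogConcave.exists_le_mul_exp {q : ℝ → ℝ} (hq : IsLogConcave q) {x : ℝ}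
    (hx : x ∈ interior {v | 0 < q v}) : ∃ c, ∀ v, q v ≤ q x * exp (c * (v - x)) := by
  obtain ⟨c, hc⟩ := hq.concaveOn_log.exists_le_add_mul_sub hx
  have hqx : 0 < q x := interior_subset (s := {v | 0 < q v}) hx
  refine ⟨c, fun v => ?_⟩
  rcases lt_or_ge 0 (q v) with hqv | hqv
  · calc q v = exp (log (q v)) := (exp_log hqv).symm
      _ ≤ exp (log (q x) + c * (v - x)) := exp_le_exp.2 (hc v hqv)
      _ = q x * exp (c * (v - x)) := by rw [exp_add, exp_log hqx]
  · exact hqv.trans (by positivity)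

theorem lintegral_mul_exp_neg_mul {c : ℝ} (hc : 0 < c) :
    ∫⁻ s in Ioi 0, ENNReal.ofReal (s * exp (-(c * s))) = ENNReal.ofReal (1 / c ^ 2) := by
  have hrpow : ∀ s : ℝ, s ^ (1 : ℝ) * exp (-c * s ^ (1 : ℝ)) = s * exp (-(c * s)) := by
    intro s
    simp [rpow_one, neg_mul]
  have hint : IntegrableOn (fun s => s * exp (-(c * s))) (Ioi 0) := by
    simpa only [hrpow] using integrableOn_rpow_mul_exp_neg_mul_rpow (s := 1) (p := 1)
      (by norm_num) one_pos hc
  rw [← ofReal_integral_eq_lintegral_ofReal hint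
    (ae_restrict_of_forall_mem measurableSet_Ioi fun s (hs : 0 < s) => by positivity)]
  have h := integral_rpow_mul_exp_neg_mul_Ioi two_pos hc
  norm_num [Gamma_two] at h
  rw [h]
  congr 1
  field_simp

section Tail

variable {Ω : Type*} [MeasurableSpace Ω] {μ : Measure Ω} {f : Ω → ℝ}

theorem integrable_max_sub_sq [IsFiniteMeasure μ] (hf : MemLp f 2 μ) (t : ℝ) :
    Integrable (fun ω => max (f ω - t) 0 ^ 2) μ := by
  have h : MemLp (fun ω => f ω - t) 2 μ := hf.sub (memLp_const t)
  refine MemLp.integrable_sq (h.of_le ?_ (ae_of_all _ fun ω => ?_))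
  · exact h.aestronglyMeasurable.sup aestronglyMeasurable_const
  · rw [norm_eq_abs, norm_eq_abs, abs_of_nonneg (le_max_right (f ω - t) 0)]
    exact max_le (le_abs_self _) (abs_nonneg _)

theorem sq_sub_mul_meas_ge_le_integral [IsFiniteMeasure μ] (hf : MemLp f 2 μ) {x t : ℝ}
    (htx : t ≤ x) : (x - t) ^ 2 * μ.real {ω | x ≤ f ω} ≤ ∫ ω, max (f ω - t) 0 ^ 2 ∂μ := by
  refine le_trans ?_ (mul_meas_ge_le_integral_of_nonneg (ae_of_all _ fun ω => sq_nonneg _)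
    (integrable_max_sub_sq hf t) ((x - t) ^ 2))
  refine mul_le_mul_of_nonneg_left (measureReal_mono fun ω (hω : x ≤ f ω) => ?_) (sq_nonneg _)
  show (x - t) ^ 2 ≤ max (f ω - t) 0 ^ 2
  exact pow_le_pow_left₀ (by linarith) (le_max_of_le_left (by linarith)) 2

theorem integral_max_sub_sq_le_of_ae_le [IsFiniteMeasure μ] (hf : Measurable f) {x : ℝ}
    (hfx : ∀ᵐ ω ∂μ, f ω ≤ x) (t : ℝ) :
    ∫ ω, max (f ω - t) 0 ^ 2 ∂μ ≤ (x - t) ^ 2 * μ.real {ω | t ≤ f ω} := by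
  have hs : MeasurableSet {ω | t ≤ f ω} := measurableSet_le measurable_const hf
  rw [mul_comm, ← smul_eq_mul, ← integral_indicator_const _ hs]
  refine integral_mono_of_nonneg (ae_of_all _ fun ω => sq_nonneg _)
    ((integrable_const _).indicator hs) ?_
  filter_upwards [hfx] with ω hω
  by_cases ht : t ≤ f ω
  · rw [indicator_of_mem (show ω ∈ {ω | t ≤ f ω} from ht)]
    exact pow_le_pow_left₀ (le_max_right _ _) (max_le (by linarith) (by linarith)) 2
  · rw [indicator_of_notMem (show ω ∉ {ω | t ≤ f ω} from ht), max_eq_right (by linarith)]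
    simp

theorem ae_le_of_forall_lt_meas_ge_eq_zero {x : ℝ}
    (h : ∀ u, x < u → μ {ω | u ≤ f ω} = 0) : ∀ᵐ ω ∂μ, f ω ≤ x := by
  obtain ⟨u, -, hxu, hu⟩ := exists_seq_strictAnti_tendsto x
  refine measure_mono_null (fun ω (hω : ¬ f ω ≤ x) => ?_)
    (measure_iUnion_null fun n => h (u n) (hxu n))
  obtain ⟨n, hn⟩ := (hu.eventually (gt_mem_nhds (not_le.1 hω))).exists
  exact mem_iUnion.2 ⟨n, hn.le⟩

theorem tendsto_meas_ge_atBot [IsFiniteMeasure μ] (f : Ω → ℝ) :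
    Tendsto (fun u => μ.real {ω | u ≤ f ω}) atBot (𝓝 (μ.real univ)) := by
  have hunion : (⋃ u : ℝ, {ω | u ≤ f ω}) = univ :=
    eq_univ_of_forall fun ω => mem_iUnion.2 ⟨f ω, show f ω ≤ f ω from le_rfl⟩
  have h := tendsto_measure_iUnion_atBot (μ := μ)
    (s := fun u : ℝ => {ω | u ≤ f ω}) fun u v huv ω (hω : v ≤ f ω) => huv.trans hω
  rw [hunion] at h
  exact (ENNReal.tendsto_toReal (measure_ne_top μ univ)).comp h

theorem tendsto_meas_ge_nhdsLT [IsFiniteMeasure μ] (hf : Measurable f) (x : ℝ) :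
    Tendsto (fun u => μ.real {ω | u ≤ f ω}) (𝓝[<] x) (𝓝 (μ.real {ω | x ≤ f ω})) := by
  have hinter : (⋂ r > -x, {ω | -r ≤ f ω}) = {ω | x ≤ f ω} := by
    ext ω
    simp only [mem_iInter, mem_ofPred_eq]
    refine ⟨fun h => le_of_forall_lt_imp_le_of_dense fun u hu => ?_, fun h r hr => by linarith⟩
    simpa using h (-u) (by linarith)
  have h := tendsto_measure_biInter_gt (μ := μ) (s := fun r : ℝ => {ω | -r ≤ f ω}) (a := -x)
    (fun r _ => (measurableSet_le measurable_const hf).nullMeasurableSet)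
    (fun r r' _ hrr' ω (hω : -r ≤ f ω) => show -r' ≤ f ω by linarith)
    ⟨-x + 1, by linarith, measure_ne_top μ _⟩
  rw [hinter] at h
  simpa [Function.comp_def, measureReal_def] using
    ((ENNReal.tendsto_toReal (measure_ne_top μ _)).comp h).comp tendsto_neg_nhdsLT

theorem lintegral_max_sub_sq_eq_lintegral_meas_ge (hf : AEMeasurable f μ) (t : ℝ) :
    ∫⁻ ω, ENNReal.ofReal (max (f ω - t) 0 ^ 2) ∂μ =
      ∫⁻ s in Ioi 0, μ {ω | t + s ≤ f ω} * ENNReal.ofReal (2 * s) := by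
  have hcake := lintegral_comp_eq_lintegral_meas_le_mul μ (f := fun ω => max (f ω - t) 0)
    (g := fun s => 2 * s) (ae_of_all _ fun ω => le_max_right _ _)
    ((hf.sub_const t).max aemeasurable_const)
    (fun _ _ => (continuous_const.mul continuous_id).intervalIntegrable _ _)
    (ae_restrict_of_forall_mem measurableSet_Ioi fun s (hs : 0 < s) => by positivity)
  have hsq : ∀ ω, ∫ s in 0..max (f ω - t) 0, 2 * s = max (f ω - t) 0 ^ 2 := fun ω => by
    rw [intervalIntegral.integral_const_mul, integral_id]
    ring
  have hlevel : ∀ s > 0, {ω | s ≤ max (f ω - t) 0} = {ω | t + s ≤ f ω} := fun s hs => by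
    ext ω
    simp only [mem_ofPred_eq, le_max_iff, not_le.2 hs, or_false]
    constructor <;> intro h <;> linarith
  simp only [hsq] at hcake
  rw [hcake]
  exact setLIntegral_congr_fun measurableSet_Ioi fun s hs => by rw [hlevel s hs]

theorem integral_max_sub_sq_le_of_meas_ge_le_mul_exp [IsFiniteMeasure μ]
    (hf : AEMeasurable f μ) {K c x : ℝ} (hc : 0 < c)
    (htail : ∀ u, μ.real {ω | u ≤ f ω} ≤ K * exp (-(c * (u - x)))) (t : ℝ) :
    ∫ ω, max (f ω - t) 0 ^ 2 ∂μ ≤ 2 * K * exp (c * (x - t)) / c ^ 2 := by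
  have hK : 0 ≤ K := measureReal_nonneg.trans (by simpa using htail x)
  have hpoint : ∀ s, μ {ω | t + s ≤ f ω} * ENNReal.ofReal (2 * s) ≤
      ENNReal.ofReal (2 * K * exp (c * (x - t))) * ENNReal.ofReal (s * exp (-(c * s))) := by
    intro s
    calc μ {ω | t + s ≤ f ω} * ENNReal.ofReal (2 * s)
        ≤ ENNReal.ofReal (K * exp (-(c * (t + s - x)))) * ENNReal.ofReal (2 * s) := by
          gcongr
          exact (ENNReal.le_ofReal_iff_toReal_le (measure_ne_top _ _) (by positivity)).2
            (htail (t + s))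
      _ = ENNReal.ofReal (2 * K * exp (c * (x - t))) * ENNReal.ofReal (s * exp (-(c * s))) := by
          rw [← ENNReal.ofReal_mul (by positivity), ← ENNReal.ofReal_mul (by positivity)]
          congr 1
          rw [show -(c * (t + s - x)) = c * (x - t) + -(c * s) by ring, exp_add]
          ring
  rw [integral_eq_lintegral_of_nonneg_ae (ae_of_all _ fun ω => sq_nonneg _)
    (by fun_prop), lintegral_max_sub_sq_eq_lintegral_meas_ge hf t]
  calc (∫⁻ s in Ioi 0, μ {ω | t + s ≤ f ω} * ENNReal.ofReal (2 * s)).toReal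
      ≤ (∫⁻ s in Ioi 0, ENNReal.ofReal (2 * K * exp (c * (x - t))) *
          ENNReal.ofReal (s * exp (-(c * s)))).toReal := by
        refine ENNReal.toReal_mono ?_ (lintegral_mono hpoint)
        rw [lintegral_const_mul' _ _ ENNReal.ofReal_ne_top, lintegral_mul_exp_neg_mul hc]
        finiteness
    _ = 2 * K * exp (c * (x - t)) / c ^ 2 := by
        rw [lintegral_const_mul' _ _ ENNReal.ofReal_ne_top, lintegral_mul_exp_neg_mul hc,
          ← ENNReal.ofReal_mul (by positivity), ENNReal.toReal_ofReal (by positivity)]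
        ring

theorem measureReal_univ_le_meas_ge_of_le_mul_exp [IsFiniteMeasure μ] {x c : ℝ} (hc : 0 ≤ c)
    (h : ∀ u, μ.real {ω | u ≤ f ω} ≤ μ.real {ω | x ≤ f ω} * exp (c * (u - x))) :
    μ.real univ ≤ μ.real {ω | x ≤ f ω} := by
  refine le_of_tendsto (tendsto_meas_ge_atBot f)
    ((eventually_le_atBot x).mono fun u hu => ?_)
  refine (h u).trans (mul_le_of_le_one_right measureReal_nonneg (exp_le_one_iff.2 ?_))
  exact mul_nonpos_of_nonneg_of_nonpos hc (sub_nonpos.2 hu)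

end Tail

section Comparison

variable {Ω₁ Ω₂ : Type*} [MeasurableSpace Ω₁] [MeasurableSpace Ω₂] {μ₁ : Measure Ω₁}
  {μ₂ : Measure Ω₂} [IsFiniteMeasure μ₁] [IsFiniteMeasure μ₂] {ξ : Ω₁ → ℝ} {η : Ω₂ → ℝ}

theorem meas_ge_le_meas_ge_of_ae_le (hξ : MemLp ξ 2 μ₁) (hη : Measurable η)
    (hmom : ∀ t, ∫ ω, max (ξ ω - t) 0 ^ 2 ∂μ₁ ≤ ∫ ω, max (η ω - t) 0 ^ 2 ∂μ₂) {x : ℝ}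
    (hηx : ∀ᵐ ω ∂μ₂, η ω ≤ x) : μ₁.real {ω | x ≤ ξ ω} ≤ μ₂.real {ω | x ≤ η ω} := by
  refine ge_of_tendsto (tendsto_meas_ge_nhdsLT hη x)
    (eventually_nhdsWithin_of_forall fun t (ht : t < x) => ?_)
  refine le_of_mul_le_mul_left ?_ (pow_pos (sub_pos.2 ht) 2)
  calc (x - t) ^ 2 * μ₁.real {ω | x ≤ ξ ω} ≤ ∫ ω, max (ξ ω - t) 0 ^ 2 ∂μ₁ :=
        sq_sub_mul_meas_ge_le_integral hξ ht.le
    _ ≤ ∫ ω, max (η ω - t) 0 ^ 2 ∂μ₂ := hmom t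
    _ ≤ (x - t) ^ 2 * μ₂.real {ω | t ≤ η ω} := integral_max_sub_sq_le_of_ae_le hη hηx t

theorem meas_ge_le_exp_two_div_two_mul_of_le_mul_exp (hξ : MemLp ξ 2 μ₁) (hη : AEMeasurable η μ₂)
    (hmom : ∀ t, ∫ ω, max (ξ ω - t) 0 ^ 2 ∂μ₁ ≤ ∫ ω, max (η ω - t) 0 ^ 2 ∂μ₂) {x c : ℝ}
    (hc : 0 < c)
    (htail : ∀ u, μ₂.real {ω | u ≤ η ω} ≤ μ₂.real {ω | x ≤ η ω} * exp (-(c * (u - x)))) :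
    μ₁.real {ω | x ≤ ξ ω} ≤ exp 2 / 2 * μ₂.real {ω | x ≤ η ω} := by
  -- `t = x - 2 / c` minimises `exp (c * (x - t)) / (x - t) ^ 2`, at the value `c ^ 2 * exp 2 / 4`.
  have hxt : x - (x - 2 / c) = 2 / c := by ring
  have h := (sq_sub_mul_meas_ge_le_integral hξ (t := x - 2 / c)
    (sub_le_self x (by positivity))).trans
    ((hmom _).trans (integral_max_sub_sq_le_of_meas_ge_le_mul_exp hη hc htail _))
  rw [hxt, mul_div_cancel₀ _ hc.ne'] at h
  calc μ₁.real {ω | x ≤ ξ ω} = c ^ 2 / 4 * ((2 / c) ^ 2 * μ₁.real {ω | x ≤ ξ ω}) := by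
        field_simp; ring
    _ ≤ c ^ 2 / 4 * (2 * μ₂.real {ω | x ≤ η ω} * exp 2 / c ^ 2) := by gcongr
    _ = exp 2 / 2 * μ₂.real {ω | x ≤ η ω} := by field_simp; ring

end Comparison

theorem stmt_5_general {Ω₁ Ω₂ : Type*} [MeasurableSpace Ω₁] [MeasurableSpace Ω₂]
    (μ₁ : Measure Ω₁) (μ₂ : Measure Ω₂)
    [IsProbabilityMeasure μ₁] [IsProbabilityMeasure μ₂]
    (ξ : Ω₁ → ℝ) (η : Ω₂ → ℝ) (hηm : Measurable η)
    (hξ2 : MemLp ξ 2 μ₁)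
    (hlc : ∀ x y : ℝ, ∀ l ∈ Set.Icc (0 : ℝ) 1,
      (μ₂ {ω | x ≤ η ω}).toReal ^ (1 - l) * (μ₂ {ω | y ≤ η ω}).toReal ^ l ≤
        (μ₂ {ω | (1 - l) * x + l * y ≤ η ω}).toReal)
    (hmom : ∀ t : ℝ,
      ∫ ω, (max (ξ ω - t) 0) ^ 2 ∂μ₁ ≤ ∫ ω, (max (η ω - t) 0) ^ 2 ∂μ₂) :
    ∀ x : ℝ, (μ₁ {ω | x ≤ ξ ω}).toReal ≤
      Real.exp 2 / 2 * (μ₂ {ω | x ≤ η ω}).toReal := by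
  simp only [← measureReal_def] at hlc ⊢
  have hG : IsLogConcave fun u => μ₂.real {ω | u ≤ η ω} := hlc
  have he : 1 ≤ exp 2 / 2 := by linarith [add_one_le_exp 2]
  intro x
  by_cases hpos : ∃ u, x < u ∧ 0 < μ₂.real {ω | u ≤ η ω}
  · obtain ⟨u, hxu, hu⟩ := hpos
    have hx : x ∈ interior {v | 0 < μ₂.real {ω | v ≤ η ω}} :=
      mem_interior_iff_mem_nhds.2 <| mem_of_superset (Iio_mem_nhds hxu) fun v (hv : v < u) =>
        hu.trans_le (measureReal_mono fun ω (h : u ≤ η ω) => hv.le.trans h)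
    obtain ⟨c, hc⟩ := hG.exists_le_mul_exp hx
    rcases lt_or_ge c 0 with hc0 | hc0
    · exact meas_ge_le_exp_two_div_two_mul_of_le_mul_exp hξ2 hηm.aemeasurable hmom (neg_pos.2 hc0)
        (by simpa only [neg_mul, neg_neg] using hc)
    · have h1 : 1 ≤ μ₂.real {ω | x ≤ η ω} := by
        simpa using measureReal_univ_le_meas_ge_of_le_mul_exp hc0 hc
      calc μ₁.real {ω | x ≤ ξ ω} ≤ 1 := measureReal_le_one
        _ ≤ exp 2 / 2 * μ₂.real {ω | x ≤ η ω} := by nlinarith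
  · push Not at hpos
    have hηx := ae_le_of_forall_lt_meas_ge_eq_zero fun u hu =>
      (measureReal_eq_zero_iff).1 ((hpos u hu).antisymm measureReal_nonneg)
    exact (meas_ge_le_meas_ge_of_ae_le hξ2 hηm hmom hηx).trans
      (le_mul_of_one_le_left measureReal_nonneg he)

theorem stmt_5 {Ω₁ Ω₂ : Type*} [MeasurableSpace Ω₁] [MeasurableSpace Ω₂]
    (μ₁ : Measure Ω₁) (μ₂ : Measure Ω₂)
    [IsProbabilityMeasure μ₁] [IsProbabilityMeasure μ₂]
    (ξ : Ω₁ → ℝ) (η : Ω₂ → ℝ) (hξm : Measurable ξ) (hηm : Measurable η)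
    (hξ2 : MemLp ξ 2 μ₁) (hη2 : MemLp η 2 μ₂)
    (hlc : ∀ x y : ℝ, ∀ l ∈ Set.Icc (0 : ℝ) 1,
      (μ₂ {ω | x ≤ η ω}).toReal ^ (1 - l) * (μ₂ {ω | y ≤ η ω}).toReal ^ l ≤
        (μ₂ {ω | (1 - l) * x + l * y ≤ η ω}).toReal)
    (hmom : ∀ t : ℝ,
      ∫ ω, (max (ξ ω - t) 0) ^ 2 ∂μ₁ ≤ ∫ ω, (max (η ω - t) 0) ^ 2 ∂μ₂) :
    ∀ x : ℝ, (μ₁ {ω | x ≤ ξ ω}).toReal ≤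
      Real.exp 2 / 2 * (μ₂ {ω | x ≤ η ω}).toReal :=
  stmt_5_general μ₁ μ₂ ξ η hηm hξ2 hlc hmom
end

section
/- The function h(u) := ln((1-u)/(-ln u)) - 1 - (1/2)·(1+u)·(ln u)/(1-u) has exactly one zero in the interval (0, 1). -/
/-!
Substituting `u = exp (-2 s)` turns `h` into
`g s = log (sinh s / s) + s coth s - s - 1` on `s > 0`. The function `g` is convex, since
`g'' s = (1 / s ^ 2 - 1 / sinh s ^ 2) + 2 (s cosh s - sinh s) / sinh s ^ 3` and
`s ≤ sinh s ≤ s cosh s`. It is negative on `(0, 1/2]` and positive at `4`, and a convex function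
that is negative on an initial segment has at most one zero beyond it.
-/

open Real Set

theorem ConvexOn.existsUnique_zero_of_neg_of_pos {f : ℝ → ℝ} {c a b : ℝ}
    (hf : ConvexOn ℝ (Ioi c) f) (hca : c < a) (hab : a < b)
    (hneg : ∀ x ∈ Ioc c a, f x < 0) (hpos : 0 < f b) :
    ∃! x, c < x ∧ f x = 0 := by
  have hfa : f a < 0 := hneg a ⟨hca, le_rfl⟩
  have hcont : ContinuousOn f (Icc a b) :=
    (hf.continuousOn isOpen_Ioi).mono fun x hx => hca.trans_le hx.1
  obtain ⟨x, hx, hfx⟩ := intermediate_value_Ioo hab.le hcont ⟨hfa, hpos⟩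
  -- Slopes of `f` increase, but the slope on `[a, y]` is positive and the one on `[y, z]` is zero.
  have no_two : ∀ y z, c < y → f y = 0 → f z = 0 → y < z → False := by
    intro y z hcy hfy hfz hyz
    have hay : a < y := lt_of_not_ge fun hya => (hneg y ⟨hcy, hya⟩).ne hfy
    have hslope := hf.slope_mono_adjacent hca (hca.trans (hay.trans hyz)) hay hyz
    rw [hfy, hfz, sub_self, zero_div] at hslope
    exact (div_pos (by linarith) (sub_pos.mpr hay)).not_ge hslope
  refine ⟨x, ⟨hca.trans hx.1, hfx⟩, fun y ⟨hcy, hfy⟩ => ?_⟩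
  rcases lt_trichotomy y x with hyx | rfl | hxy
  · exact (no_two y x hcy hfy hfx hyx).elim
  · rfl
  · exact (no_two x y (hca.trans hx.1) hfx hfy hxy).elim

namespace Real

theorem sinh_le_mul_cosh {x : ℝ} (hx : 0 ≤ x) : sinh x ≤ x * cosh x := by
  have hmono : MonotoneOn (fun y => y * cosh y - sinh y) (Ici 0) := by
    refine monotoneOn_of_hasDerivWithinAt_nonneg (f' := fun y => y * sinh y) (convex_Ici 0)
      (by fun_prop) (fun y _ => ?_) fun y hy => ?_
    · have hd := ((hasDerivAt_id' y).mul (hasDerivAt_cosh y)).sub (hasDerivAt_sinh y)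
      exact hd.hasDerivWithinAt.congr_deriv (by ring)
    · rw [interior_Ici] at hy
      exact mul_nonneg hy.le (sinh_nonneg_iff.mpr hy.le)
  simpa using hmono self_mem_Ici hx hx

end Real

namespace LogRatio

noncomputable def h (u : ℝ) : ℝ :=
  log ((1 - u) / (-log u)) - 1 - (1 / 2) * ((1 + u) * log u) / (1 - u)

noncomputable def g (s : ℝ) : ℝ :=
  log (sinh s / s) + s * cosh s / sinh s - s - 1

noncomputable def g' (s : ℝ) : ℝ :=
  2 * cosh s / sinh s - 1 / s - s / sinh s ^ 2 - 1

theorem h_exp_neg_two_mul {s : ℝ} (hs : 0 < s) : h (exp (-2 * s)) = g s := by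
  have hsinh : 0 < sinh s := sinh_pos_iff.mpr hs
  have hexp : exp s * exp (-s) = 1 := by rw [← exp_add, add_neg_cancel, exp_zero]
  have hu : exp (-2 * s) = exp (-s) ^ 2 := by rw [← exp_nat_mul]; ring_nf
  have hratio : (1 - exp (-2 * s)) / (-log (exp (-2 * s))) = exp (-s) * (sinh s / s) := by
    rw [log_exp, hu, sinh_eq]
    field_simp
    linear_combination (-1) * hexp
  have hcoth : (1 + exp (-2 * s)) / (1 - exp (-2 * s)) = cosh s / sinh s := by
    rw [div_eq_div_iff (sub_pos.mpr (exp_lt_one_iff.mpr (by linarith))).ne' hsinh.ne', hu,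
      sinh_eq, cosh_eq]
    linear_combination exp (-s) * hexp
  rw [h, hratio, log_mul (exp_pos _).ne' (div_pos hsinh hs).ne', log_exp, log_exp, g,
    show ∀ a b : ℝ, 1 / 2 * (a * (-2 * s)) / b = -(s * (a / b)) by intros; ring, hcoth]
  ring

lemma hasDerivAt_g {s : ℝ} (hs : 0 < s) :
    HasDerivAt g (g' s) s := by
  have hsinh : 0 < sinh s := sinh_pos_iff.mpr hs
  have hlog := ((hasDerivAt_sinh s).div (hasDerivAt_id' s) hs.ne').log (div_pos hsinh hs).ne'
  have hcoth := ((hasDerivAt_id' s).mul (hasDerivAt_cosh s)).div (hasDerivAt_sinh s) hsinh.ne'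
  refine (((hlog.add hcoth).sub (hasDerivAt_id' s)).sub_const 1).congr_deriv ?_
  simp only [g', Pi.div_apply, Pi.mul_apply]
  field_simp
  linear_combination (-s ^ 2) * cosh_sq s

lemma hasDerivAt_g' {s : ℝ} (hs : 0 < s) :
    HasDerivAt g' ((1 / s ^ 2 - 1 / sinh s ^ 2) + 2 * (s * cosh s - sinh s) / sinh s ^ 3) s := by
  have hsinh : 0 < sinh s := sinh_pos_iff.mpr hs
  have h1 := ((hasDerivAt_cosh s).const_mul 2).div (hasDerivAt_sinh s) hsinh.ne'
  have h2 := (hasDerivAt_const s (1 : ℝ)).div (hasDerivAt_id' s) hs.ne'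
  have h3 := (hasDerivAt_id' s).div ((hasDerivAt_sinh s).pow 2) (pow_pos hsinh 2).ne'
  refine (((h1.sub h2).sub h3).sub_const 1).congr_deriv ?_
  simp only [Pi.pow_apply]
  field_simp
  linear_combination (-2 * sinh s ^ 2 * s ^ 2) * cosh_sq s

theorem convexOn_g : ConvexOn ℝ (Ioi 0) g := by
  refine convexOn_of_hasDerivWithinAt2_nonneg (convex_Ioi 0) (f' := g')
    (f'' := fun s => (1 / s ^ 2 - 1 / sinh s ^ 2) + 2 * (s * cosh s - sinh s) / sinh s ^ 3)
    (fun s hs => (hasDerivAt_g hs).continuousAt.continuousWithinAt) (fun s hs => ?_)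
    (fun s hs => ?_) fun s hs => ?_ <;> rw [interior_Ioi] at hs
  · exact (hasDerivAt_g hs).hasDerivWithinAt
  · exact (hasDerivAt_g' hs).hasDerivWithinAt
  · have hs : 0 < s := hs
    have hinv : 1 / sinh s ^ 2 ≤ 1 / s ^ 2 :=
      one_div_le_one_div_of_le (by positivity) (by gcongr; exact self_le_sinh_iff.mpr hs.le)
    have hcoth : 0 ≤ 2 * (s * cosh s - sinh s) / sinh s ^ 3 :=
      div_nonneg (by linarith [sinh_le_mul_cosh hs.le]) (pow_pos (sinh_pos_iff.mpr hs) 3).le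
    linarith

theorem g_neg {s : ℝ} (hs : 0 < s) (hs' : s ≤ 1 / 2) : g s < 0 := by
  have hsinh : 0 < sinh s := sinh_pos_iff.mpr hs
  have hlog : log (sinh s / s) ≤ cosh s - 1 := by
    have hle : sinh s / s ≤ cosh s :=
      (div_le_iff₀ hs).mpr (by linarith [sinh_le_mul_cosh hs.le])
    linarith [log_le_sub_one_of_pos (div_pos hsinh hs)]
  have hcoth : s * cosh s / sinh s ≤ cosh s :=
    (div_le_iff₀ hsinh).mpr (by nlinarith [self_le_sinh_iff.mpr hs.le, cosh_pos s])
  have hcosh : cosh s < 1 / (1 - s ^ 2 / 2) :=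
    (cosh_le_exp_half_sq s).trans_lt
      (exp_bound_div_one_sub_of_interval' (by positivity) (by nlinarith))
  have hbound : 2 * (1 / (1 - s ^ 2 / 2)) ≤ 2 + s := by
    rw [mul_one_div, div_le_iff₀ (by nlinarith)]
    nlinarith
  unfold g
  linarith

theorem g_four_pos : 0 < g 4 := by
  have hsinh : 0 < sinh 4 := sinh_pos_iff.mpr (by norm_num)
  have hcoth : 4 ≤ 4 * cosh 4 / sinh 4 :=
    (le_div_iff₀ hsinh).mpr (by nlinarith [sinh_lt_cosh (x := 4)])
  have hlog : 1 < log (sinh 4 / 4) := by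
    rw [lt_log_iff_exp_lt (by positivity), sinh_eq, lt_div_iff₀ (by norm_num)]
    have h4 : exp 4 = exp 1 ^ 4 := by rw [exp_one_pow]; norm_num
    have he : 2.7 < exp 1 := by linarith [exp_one_gt_d9]
    have he3 : (2.7 : ℝ) ^ 3 < exp 1 ^ 3 := by gcongr
    have hinv : exp (-4) < 1 := exp_lt_one_iff.mpr (by norm_num)
    rw [h4]
    nlinarith
  unfold g
  linarith

theorem existsUnique_g_eq_zero : ∃! s, 0 < s ∧ g s = 0 :=
  convexOn_g.existsUnique_zero_of_neg_of_pos (a := 1 / 2) (by norm_num) (by norm_num)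
    (fun _ hs => g_neg hs.1 hs.2) g_four_pos

end LogRatio

theorem stmt_6 :
    ∃! u : ℝ, u ∈ Set.Ioo (0 : ℝ) 1 ∧
      Real.log ((1 - u) / (-Real.log u)) - 1
        - (1 / 2) * ((1 + u) * Real.log u) / (1 - u) = 0 := by
  obtain ⟨s, ⟨hs, hgs⟩, huniq⟩ := LogRatio.existsUnique_g_eq_zero
  refine ⟨exp (-2 * s), ⟨⟨exp_pos _, exp_lt_one_iff.mpr (by linarith)⟩, ?_⟩, ?_⟩
  · change LogRatio.h _ = 0
    rw [LogRatio.h_exp_neg_two_mul hs, hgs]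
  · rintro u ⟨⟨hu0, hu1⟩, hu⟩
    have ht : 0 < -log u / 2 := by linarith [log_neg hu0 hu1]
    have hu_eq : exp (-2 * (-log u / 2)) = u := by
      rw [show -2 * (-log u / 2) = log u by ring, exp_log hu0]
    have hgt : LogRatio.g (-log u / 2) = 0 := by
      rw [← LogRatio.h_exp_neg_two_mul ht, hu_eq]
      exact hu
    rw [← hu_eq, huniq _ ⟨ht, hgt⟩]
end

section
/- Let u* ∈ (0,1) be the unique root of the equation ln((1-u)/(-ln u)) - 1 - (1/2)(1+u)(ln u)/(1-u) = 0. Then for all δ ∈ (0, 1/2) and all u ∈ [u*, 1], one has u^δ - (1/2 - δ) - (1/2 + δ)u ≥ 0. -/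
noncomputable def auxG (u : ℝ) : ℝ :=
  Real.log ((1 - u) / (-Real.log u)) - 1
    - (1 / 2) * ((1 + u) * Real.log u) / (1 - u)

lemma aux_log_ge (x : ℝ) (hx : 0 < x) : 1 - 1/x ≤ Real.log x := by
  have h := Real.log_le_sub_one_of_pos (show (0:ℝ) < 1/x by positivity)
  rw [Real.log_div one_ne_zero (ne_of_gt hx), Real.log_one] at h
  linarith

lemma auxG_contAt (u : ℝ) (h : u ∈ Set.Ioo (0:ℝ) 1) : ContinuousAt auxG u := by
  obtain ⟨h0, h1⟩ := h
  have hlogu : Real.log u < 0 := Real.log_neg h0 h1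
  have hlog : ContinuousAt Real.log u := Real.continuousAt_log (ne_of_gt h0)
  have hinner : ContinuousAt (fun u => (1 - u) / (-Real.log u)) u :=
    (continuousAt_const.sub continuousAt_id).div hlog.neg (by linarith)
  have hval : (0:ℝ) < (1 - u) / (-Real.log u) := by
    apply div_pos <;> linarith
  exact ((hinner.log (ne_of_gt hval)).sub continuousAt_const).sub
    ((continuousAt_const.mul ((continuousAt_const.add continuousAt_id).mul hlog)).div
      (continuousAt_const.sub continuousAt_id) (by linarith))

lemma auxG_half_neg : auxG (1/2) < 0 := by
  have h2 : (0:ℝ) < Real.log 2 := Real.log_pos (by norm_num)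
  have hl : Real.log ((1:ℝ)/2) = -Real.log 2 := by
    rw [Real.log_div one_ne_zero two_ne_zero, Real.log_one]; ring
  have hgt := Real.log_two_gt_d9
  have hlt := Real.log_two_lt_d9
  have hlow : 1 - 1/Real.log 2 ≤ Real.log (Real.log 2) := aux_log_ge _ h2
  have hinv : 1/Real.log 2 ≤ 1.443 := by
    rw [div_le_iff₀ h2]; nlinarith
  unfold auxG
  rw [hl]
  have : Real.log ((1 - 1/2) / (- -Real.log 2)) = Real.log (1/2) - Real.log (Real.log 2) := by
    rw [neg_neg, show (1:ℝ) - 1/2 = 1/2 by norm_num,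
      Real.log_div (by norm_num) (ne_of_gt h2)]
  rw [this, hl]
  have e : (1/2:ℝ) * ((1 + 1/2) * -Real.log 2) / (1 - 1/2) = -(3/2) * Real.log 2 := by
    ring
  linarith

lemma auxG_u0_pos : auxG (1/1024) > 0 := by
  have h2 : (0:ℝ) < Real.log 2 := Real.log_pos (by norm_num)
  have hgt := Real.log_two_gt_d9
  have hlt := Real.log_two_lt_d9
  have hl : Real.log ((1:ℝ)/1024) = -(10 * Real.log 2) := by
    rw [Real.log_div one_ne_zero (by norm_num), Real.log_one,
      show (1024:ℝ) = 2^10 by norm_num, Real.log_pow]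
    push_cast; ring
  have h10 : (0:ℝ) < 10 * Real.log 2 := by linarith
  unfold auxG
  rw [hl, neg_neg]
  have hsplit : Real.log ((1 - 1/1024) / (10 * Real.log 2))
      = Real.log (1023/1024) - Real.log (10 * Real.log 2) := by
    rw [show (1:ℝ) - 1/1024 = 1023/1024 by norm_num,
      Real.log_div (by norm_num) (ne_of_gt h10)]
  rw [hsplit]
  have hlow : (1:ℝ) - 1/(1023/1024) ≤ Real.log (1023/1024) := aux_log_ge _ (by norm_num)
  have hup : Real.log (10 * Real.log 2) ≤ 3 * Real.log 2 := by
    rw [show (3:ℝ) * Real.log 2 = Real.log (2^3) by rw [Real.log_pow]; push_cast; ring]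
    apply Real.log_le_log h10
    norm_num; nlinarith
  have hterm : -(1 / 2) * ((1 + 1/1024) * -(10 * Real.log 2)) / (1 - 1/1024)
      ≥ 5 * Real.log 2 := by
    rw [ge_iff_le, le_div_iff₀ (by norm_num : (0:ℝ) < 1 - 1/1024)]
    nlinarith
  have : (1:ℝ) - 1/(1023/1024) ≥ -0.001 := by norm_num
  have e : (1/2:ℝ) * ((1 + 1/1024) * -(10 * Real.log 2)) / (1 - 1/1024)
      = -(5 * 1025/1023) * Real.log 2 := by ring
  linarith

theorem stmt_7 (ustar : ℝ) (hu : ustar ∈ Set.Ioo (0 : ℝ) 1)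
    (hroot : Real.log ((1 - ustar) / (-Real.log ustar)) - 1
      - (1 / 2) * ((1 + ustar) * Real.log ustar) / (1 - ustar) = 0)
    (huniq : ∀ u ∈ Set.Ioo (0 : ℝ) 1,
      Real.log ((1 - u) / (-Real.log u)) - 1
        - (1 / 2) * ((1 + u) * Real.log u) / (1 - u) = 0 → u = ustar) :
    ∀ δ ∈ Set.Ioo (0 : ℝ) (1 / 2), ∀ u ∈ Set.Icc ustar 1,
      u ^ (δ : ℝ) - (1 / 2 - δ) - (1 / 2 + δ) * u ≥ 0 := by
  have hrootG : auxG ustar = 0 := hroot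
  have huniqG : ∀ u ∈ Set.Ioo (0:ℝ) 1, auxG u = 0 → u = ustar := huniq
  obtain ⟨hu0, hu1⟩ := hu
  -- Step C : ustar < 1/2
  have hstar_lt : ustar < 1/2 := by
    have hcont : ContinuousOn auxG (Set.Icc (1/1024 : ℝ) (1/2)) := by
      intro x hx
      exact (auxG_contAt x ⟨lt_of_lt_of_le (by norm_num) hx.1,
        lt_of_le_of_lt hx.2 (by norm_num)⟩).continuousWithinAt
    have hmem : (0:ℝ) ∈ Set.Ioo (auxG (1/2)) (auxG (1/1024)) :=
      ⟨auxG_half_neg, auxG_u0_pos⟩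
    obtain ⟨w, hw, hwe⟩ := intermediate_value_Ioo' (by norm_num : (1/1024:ℝ) ≤ 1/2)
      hcont hmem
    have := huniqG w ⟨lt_trans (by norm_num) hw.1, lt_trans hw.2 (by norm_num)⟩ hwe
    linarith [hw.2, this.symm.le]
  -- Step D : auxG ≤ 0 on [ustar, 1)
  have hGle : ∀ u ∈ Set.Ico ustar 1, auxG u ≤ 0 := by
    intro u ⟨hul, hur⟩
    rcases eq_or_lt_of_le hul with rfl | hlt
    · exact le_of_eq hrootG
    by_contra hpos
    push_neg at hpos
    rcases lt_trichotomy u (1/2) with hc | hc | hc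
    · -- root in (u, 1/2), equal ustar, but ustar < u
      have hcont : ContinuousOn auxG (Set.Icc u (1/2)) := by
        intro x hx
        exact (auxG_contAt x ⟨lt_of_lt_of_le (lt_trans hu0 hlt) hx.1,
          lt_of_le_of_lt hx.2 (by norm_num)⟩).continuousWithinAt
      obtain ⟨w, hw, hwe⟩ := intermediate_value_Ioo' hc.le hcont
        ⟨auxG_half_neg, hpos⟩
      have := huniqG w ⟨lt_trans (lt_trans hu0 hlt) hw.1,
        lt_trans hw.2 (by norm_num)⟩ hwe
      linarith [hw.1, this.le]
    · exact absurd (hc ▸ hpos) (not_lt.mpr auxG_half_neg.le)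
    · have hcont : ContinuousOn auxG (Set.Icc (1/2 : ℝ) u) := by
        intro x hx
        exact (auxG_contAt x ⟨lt_of_lt_of_le (by norm_num) hx.1,
          lt_of_le_of_lt hx.2 hur⟩).continuousWithinAt
      obtain ⟨w, hw, hwe⟩ := intermediate_value_Ioo hc.le hcont
        ⟨auxG_half_neg, hpos⟩
      have := huniqG w ⟨lt_trans (by norm_num) hw.1, lt_trans hw.2 hur⟩ hwe
      linarith [hw.1, this.le]
  -- Main inequality
  intro δ hδ u humem
  obtain ⟨hδ0, hδ12⟩ := hδ
  obtain ⟨hul, hur⟩ := humem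
  rcases eq_or_lt_of_le hur with rfl | hu1'
  · rw [Real.one_rpow]; ring_nf; linarith
  · have hupos : 0 < u := lt_of_lt_of_le hu0 hul
    set L := Real.log u with hL
    have hLneg : L < 0 := Real.log_neg hupos hu1'
    have hLne : L ≠ 0 := ne_of_lt hLneg
    set A : ℝ := (1 - u) / (-L) with hA
    have hApos : 0 < A := div_pos (by linarith) (by linarith)
    have hAL : A * L = -(1 - u) := by
      calc A * L = -(A * -L) := by ring
        _ = -(1 - u) := by rw [hA, div_mul_cancel₀ _ (neg_ne_zero.mpr hLne)]
    set δ0 : ℝ := Real.log A / L with hδ0def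
    have hexp0 : Real.exp (δ0 * L) = A := by
      rw [hδ0def, div_mul_cancel₀ _ hLne, Real.exp_log hApos]
    have hrpow : u ^ (δ:ℝ) = Real.exp (δ * L) := by
      rw [Real.rpow_def_of_pos hupos, mul_comm]
    have hconv : u ^ (δ:ℝ) ≥ A + (δ - δ0) * (A * L) := by
      have h1 : 1 + (δ - δ0) * L ≤ Real.exp ((δ - δ0) * L) := by
        linarith [Real.add_one_le_exp ((δ - δ0) * L)]
      have h2 : Real.exp (δ * L) = Real.exp (δ0 * L) * Real.exp ((δ - δ0) * L) := by
        rw [← Real.exp_add]; ring_nf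
      have h3 : A * (1 + (δ - δ0) * L) ≤ A * Real.exp ((δ - δ0) * L) :=
        mul_le_mul_of_nonneg_left h1 hApos.le
      rw [hrpow, h2, hexp0]
      nlinarith
    have hGu : auxG u ≤ 0 := hGle u ⟨hul, hu1'⟩
    have hF : A + δ0 * (1 - u) - (1 + u) / 2 = ((1 - u) / L) * auxG u := by
      unfold auxG
      rw [← hL, ← hA]
      set B := Real.log A with hB
      rw [hδ0def, hA]
      have h1u : (1:ℝ) - u ≠ 0 := by linarith
      field_simp [hLne]
      ring
    have hFnn : A + δ0 * (1 - u) - (1 + u) / 2 ≥ 0 := by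
      rw [hF]
      have h1 : (1 - u) / L ≤ 0 :=
        div_nonpos_of_nonneg_of_nonpos (by linarith) hLneg.le
      nlinarith [mul_nonneg (neg_nonneg.mpr h1) (neg_nonneg.mpr hGu)]
    have key : u ^ (δ:ℝ) - (1 / 2 - δ) - (1 / 2 + δ) * u
        = (u ^ (δ:ℝ) - (A + (δ - δ0) * (A * L)))
          + (A + δ0 * (1 - u) - (1 + u) / 2) := by
      rw [hAL]; ring
    linarith [hconv, hFnn, key.ge, key.le]
end

section
/- Let r(α) := ln(1/2 - α)/(-α) for α ∈ (0, 1/2). Then there is a unique α* ∈ (0, 1/2) such that r is strictly decreasing on (0, α*) and strictly increasing on (α*, 1/2); in particular α* is the unique minimizer of r on (0, 1/2). -/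
/-!
With `r α = log (1/2 - α) / (-α)` one computes `r' α = g α / α²`, where
`g α = α / (1/2 - α) + log (1/2 - α)`. Since `g' α = α / (1/2 - α)² > 0`, `g` is strictly increasing
on `[0, 1/2)`; it goes from `g 0 = -log 2 < 0` to `g (3/8) = 3 (1 - log 2) > 0`, so it has a unique
zero `α*` there, and `r' < 0` before `α*` and `r' > 0` after it.
-/

open Real Set

lemma strictMonoOn_of_hasDerivAt_pos {D : Set ℝ} (hD : Convex ℝ D) {f f' : ℝ → ℝ}
    (hf : ∀ x ∈ D, HasDerivAt f (f' x) x) (hf' : ∀ x ∈ interior D, 0 < f' x) :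
    StrictMonoOn f D :=
  strictMonoOn_of_hasDerivWithinAt_pos hD (fun x hx ↦ (hf x hx).continuousAt.continuousWithinAt)
    (fun x hx ↦ (hf x (interior_subset hx)).hasDerivWithinAt) hf'

lemma strictAntiOn_of_hasDerivAt_neg {D : Set ℝ} (hD : Convex ℝ D) {f f' : ℝ → ℝ}
    (hf : ∀ x ∈ D, HasDerivAt f (f' x) x) (hf' : ∀ x ∈ interior D, f' x < 0) :
    StrictAntiOn f D :=
  strictAntiOn_of_hasDerivWithinAt_neg hD (fun x hx ↦ (hf x hx).continuousAt.continuousWithinAt)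
    (fun x hx ↦ (hf x (interior_subset hx)).hasDerivWithinAt) hf'

lemma StrictAntiOn.lt_of_strictMonoOn {α β : Type*} [LinearOrder α] [Preorder β] {f : α → β}
    {a b c x : α} (hf₁ : StrictAntiOn f (Ioc a b)) (hf₂ : StrictMonoOn f (Ico b c))
    (hb : b ∈ Ioo a c) (hx : x ∈ Ioo a c) (hxb : x ≠ b) : f b < f x := by
  rcases hxb.lt_or_gt with h | h
  · exact hf₁ ⟨hx.1, h.le⟩ ⟨hb.1, le_rfl⟩ h
  · exact hf₂ ⟨le_rfl, hb.2⟩ ⟨h.le, hx.2⟩ h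

noncomputable def logRatio (α : ℝ) : ℝ := log (1 / 2 - α) / (-α)

noncomputable def logRatioDerivNumer (α : ℝ) : ℝ := α / (1 / 2 - α) + log (1 / 2 - α)

lemma hasDerivAt_log_half_sub {α : ℝ} (h : α < 1 / 2) :
    HasDerivAt (fun x ↦ log (1 / 2 - x)) (-1 / (1 / 2 - α)) α := by
  have := ((hasDerivAt_id α).const_sub (1 / 2 : ℝ)).log (by simp; linarith)
  simpa [neg_div] using this

lemma hasDerivAt_logRatioDerivNumer {α : ℝ} (h : α < 1 / 2) :
    HasDerivAt logRatioDerivNumer (α / (1 / 2 - α) ^ 2) α := by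
  have hne : 1 / 2 - α ≠ 0 := by linarith
  refine (((hasDerivAt_id α).div ((hasDerivAt_id α).const_sub (1 / 2 : ℝ)) hne).add
    (hasDerivAt_log_half_sub h)).congr_deriv ?_
  simp only [id]
  field_simp
  ring

lemma hasDerivAt_logRatio {α : ℝ} (h₀ : α ≠ 0) (h : α < 1 / 2) :
    HasDerivAt logRatio (logRatioDerivNumer α / α ^ 2) α := by
  have hne : 1 / 2 - α ≠ 0 := by linarith
  refine ((hasDerivAt_log_half_sub h).div (hasDerivAt_id α).neg
    (neg_ne_zero.mpr h₀)).congr_deriv ?_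
  simp only [logRatioDerivNumer, Pi.neg_apply, id]
  field_simp
  ring

lemma strictMonoOn_logRatioDerivNumer : StrictMonoOn logRatioDerivNumer (Ico 0 (1 / 2)) :=
  strictMonoOn_of_hasDerivAt_pos (convex_Ico _ _)
    (fun _ hx ↦ hasDerivAt_logRatioDerivNumer hx.2) fun x hx ↦ by
      rw [interior_Ico] at hx
      exact div_pos hx.1 (pow_pos (by linarith [hx.2]) 2)

lemma logRatioDerivNumer_zero_neg : logRatioDerivNumer 0 < 0 := by
  simpa [logRatioDerivNumer] using log_neg (by norm_num : (0 : ℝ) < 1 / 2) (by norm_num)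

lemma logRatioDerivNumer_three_eighths_pos : 0 < logRatioDerivNumer (3 / 8) := by
  have h : logRatioDerivNumer (3 / 8) = 3 * (1 - log 2) := by
    rw [logRatioDerivNumer, show (1 / 2 - 3 / 8 : ℝ) = (2 ^ 3)⁻¹ by norm_num, log_inv, log_pow]
    ring
  rw [h]
  linarith [log_two_lt_d9]

lemma exists_logRatioDerivNumer_eq_zero : ∃ a ∈ Ioo (0 : ℝ) (1 / 2), logRatioDerivNumer a = 0 := by
  have hcont : ContinuousOn logRatioDerivNumer (Icc 0 (3 / 8)) := fun x hx ↦
    (hasDerivAt_logRatioDerivNumer (by linarith [hx.2])).continuousAt.continuousWithinAt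
  obtain ⟨a, ha, hga⟩ := intermediate_value_Ioo (by norm_num) hcont
    ⟨logRatioDerivNumer_zero_neg, logRatioDerivNumer_three_eighths_pos⟩
  exact ⟨a, ⟨ha.1, by linarith [ha.2]⟩, hga⟩

lemma strictAntiOn_logRatio {a : ℝ} (ha : a ∈ Ioo 0 (1 / 2)) (hga : logRatioDerivNumer a = 0) :
    StrictAntiOn logRatio (Ioc 0 a) :=
  strictAntiOn_of_hasDerivAt_neg (convex_Ioc _ _)
    (fun x hx ↦ hasDerivAt_logRatio hx.1.ne' (hx.2.trans_lt ha.2)) fun x hx ↦ by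
      rw [interior_Ioc] at hx
      have hgx : logRatioDerivNumer x < 0 := hga ▸
        strictMonoOn_logRatioDerivNumer ⟨hx.1.le, hx.2.trans ha.2⟩ ⟨ha.1.le, ha.2⟩ hx.2
      exact div_neg_of_neg_of_pos hgx (pow_pos hx.1 2)

lemma strictMonoOn_logRatio {a : ℝ} (ha : a ∈ Ioo 0 (1 / 2)) (hga : logRatioDerivNumer a = 0) :
    StrictMonoOn logRatio (Ico a (1 / 2)) :=
  strictMonoOn_of_hasDerivAt_pos (convex_Ico _ _)
    (fun x hx ↦ hasDerivAt_logRatio (ha.1.trans_le hx.1).ne' hx.2) fun x hx ↦ by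
      rw [interior_Ico] at hx
      have hgx : 0 < logRatioDerivNumer x := hga ▸
        strictMonoOn_logRatioDerivNumer ⟨ha.1.le, ha.2⟩ ⟨(ha.1.trans hx.1).le, hx.2⟩ hx.1
      exact div_pos hgx (pow_pos (ha.1.trans hx.1) 2)

theorem stmt_10 :
    ∃! αstar : ℝ, αstar ∈ Set.Ioo (0 : ℝ) (1 / 2) ∧
      StrictAntiOn (fun α : ℝ => Real.log (1 / 2 - α) / (-α)) (Set.Ioc (0 : ℝ) αstar) ∧
      StrictMonoOn (fun α : ℝ => Real.log (1 / 2 - α) / (-α)) (Set.Ico αstar (1 / 2)) ∧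
      ∀ α ∈ Set.Ioo (0 : ℝ) (1 / 2), α ≠ αstar →
        Real.log (1 / 2 - αstar) / (-αstar) < Real.log (1 / 2 - α) / (-α) := by
  obtain ⟨a, ha, hga⟩ := exists_logRatioDerivNumer_eq_zero
  have hanti := strictAntiOn_logRatio ha hga
  have hmono := strictMonoOn_logRatio ha hga
  have hmin : ∀ x ∈ Ioo (0 : ℝ) (1 / 2), x ≠ a → logRatio a < logRatio x :=
    fun x hx hxa ↦ hanti.lt_of_strictMonoOn hmono ha hx hxa
  refine ⟨a, ⟨ha, hanti, hmono, hmin⟩, ?_⟩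
  rintro b ⟨hb, -, -, hbmin⟩
  by_contra hba
  exact (hmin b hb hba).asymm (hbmin a ha (Ne.symm hba))
end

section
/- Let B_n be a binomial(n, p) random variable and q_j := P(B_n ≥ j) for integers j. Then the sequence (q_j)_{j=0}^{n} is log-concave on ℤ ∩ [0, n+1], i.e., q_j² ≥ q_{j-1} q_{j+1} for all integers 1 ≤ j ≤ n. -/
open Finset

private lemma choose_ineq (n i k : ℕ) (hik : i ≤ k) (hk : k ≤ n) :
    n.choose i * n.choose (k + 1) ≤ n.choose (i + 1) * n.choose k := by
  have h1 : n.choose (i + 1) * (i + 1) = n.choose i * (n - i) :=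
    Nat.choose_succ_right_eq n i
  have h2 : n.choose (k + 1) * (k + 1) = n.choose k * (n - k) :=
    Nat.choose_succ_right_eq n k
  have key : (n - k) * (i + 1) ≤ (n - i) * (k + 1) :=
    Nat.mul_le_mul (Nat.sub_le_sub_left hik n) (by omega)
  have : n.choose i * n.choose (k + 1) * ((i + 1) * (k + 1)) ≤
      n.choose (i + 1) * n.choose k * ((i + 1) * (k + 1)) := by
    calc n.choose i * n.choose (k + 1) * ((i + 1) * (k + 1))
        = n.choose i * (n.choose (k + 1) * (k + 1)) * (i + 1) := by ring
      _ = n.choose i * (n.choose k * (n - k)) * (i + 1) := by rw [h2]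
      _ = n.choose i * n.choose k * ((n - k) * (i + 1)) := by ring
      _ ≤ n.choose i * n.choose k * ((n - i) * (k + 1)) :=
          Nat.mul_le_mul_left _ key
      _ = n.choose i * (n - i) * n.choose k * (k + 1) := by ring
      _ = n.choose (i + 1) * (i + 1) * n.choose k * (k + 1) := by rw [h1]
      _ = n.choose (i + 1) * n.choose k * ((i + 1) * (k + 1)) := by ring
  exact Nat.le_of_mul_le_mul_right this (by positivity)

theorem stmt_13 (n : ℕ) (hn : 0 < n) (p : ℝ) (hp : p ∈ Set.Ioo (0 : ℝ) 1)
    (q : ℕ → ℝ)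
    (hq : ∀ j : ℕ, q j = ∑ k ∈ Finset.Icc j n,
      (n.choose k : ℝ) * p ^ k * (1 - p) ^ (n - k)) :
    ∀ j : ℕ, 1 ≤ j → j ≤ n → q j ^ 2 ≥ q (j - 1) * q (j + 1) := by
  obtain ⟨hp0, hp1⟩ := hp
  have hq1 : (0:ℝ) < 1 - p := by linarith
  set a : ℕ → ℝ := fun k => (n.choose k : ℝ) * p ^ k * (1 - p) ^ (n - k) with ha
  have hanneg : ∀ k, 0 ≤ a k := fun k => by positivity
  -- termwise log-concavity
  have L1 : ∀ i k : ℕ, i ≤ k → k + 1 ≤ n → a i * a (k + 1) ≤ a (i + 1) * a k := by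
    intro i k hik hk
    have hin : i + 1 ≤ n := by omega
    have lhs : a i * a (k + 1) =
        (n.choose i * n.choose (k+1) : ℕ) * (p ^ (i + (k+1)) * (1-p) ^ (n - i + (n - (k+1)))) := by
      simp only [ha]
      push_cast
      rw [pow_add p i (k+1), pow_add (1-p) (n-i) (n-(k+1))]
      ring
    have rhs : a (i + 1) * a k =
        (n.choose (i+1) * n.choose k : ℕ) * (p ^ (i + (k+1)) * (1-p) ^ (n - i + (n - (k+1)))) := by
      have eE : n - (i+1) + (n - k) = n - i + (n - (k+1)) := by omega
      have eP : i + (k + 1) = (i + 1) + k := by omega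
      simp only [ha]
      rw [← eE, eP]
      push_cast
      rw [pow_add p (i+1) k, pow_add (1-p) (n-(i+1)) (n-k)]
      ring
    rw [lhs, rhs]
    apply mul_le_mul_of_nonneg_right
    · exact_mod_cast choose_ineq n i k hik (by omega)
    · positivity
  -- q in terms of a
  have hqa : ∀ m, q m = ∑ k ∈ Icc m n, a k := hq
  have hqnneg : ∀ m, 0 ≤ q m := fun m => by
    rw [hqa]; exact Finset.sum_nonneg fun k _ => hanneg k
  -- splitting
  have hsplit : ∀ m, m ≤ n → q m = a m + q (m + 1) := by
    intro m hm
    rw [hqa, hqa, Finset.Icc_eq_cons_Ioc hm, Finset.sum_cons, ← Finset.Icc_add_one_left_eq_Ioc]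
  intro j hj1 hjn
  obtain ⟨i, rfl⟩ : ∃ i, j = i + 1 := ⟨j - 1, by omega⟩
  simp only [Nat.add_sub_cancel]
  -- key: a (i+1) * q (i+1) ≥ a i * q (i+2)
  have key : a i * q (i + 1 + 1) ≤ a (i + 1) * q (i + 1) := by
    rcases le_or_gt (i + 2) n with h | h
    · have hrw : Icc (i + 2) n = (Icc (i + 1) (n - 1)).map (addLeftEmbedding 1) := by
        rw [Finset.map_add_left_Icc]
        congr 1 <;> omega
      calc a i * q (i + 1 + 1)
          = ∑ k ∈ Icc (i + 1) (n - 1), a i * a (k + 1) := by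
            rw [hqa, Finset.mul_sum, hrw, Finset.sum_map]
            apply Finset.sum_congr rfl
            intro k _
            simp [addLeftEmbedding, add_comm 1 k]
        _ ≤ ∑ k ∈ Icc (i + 1) (n - 1), a (i + 1) * a k := by
            apply Finset.sum_le_sum
            intro k hk
            simp only [Finset.mem_Icc] at hk
            exact L1 i k (by omega) (by omega)
        _ ≤ ∑ k ∈ Icc (i + 1) n, a (i + 1) * a k := by
            apply Finset.sum_le_sum_of_subset_of_nonneg
            · exact Finset.Icc_subset_Icc_right (by omega)
            · intro k _ _
              exact mul_nonneg (hanneg _) (hanneg _)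
        _ = a (i + 1) * q (i + 1) := by rw [hqa, Finset.mul_sum]
    · have : q (i + 1 + 1) = 0 := by
        rw [hqa, Finset.Icc_eq_empty (by omega), Finset.sum_empty]
      rw [this, mul_zero]
      exact mul_nonneg (hanneg _) (hqnneg _)
  have e1 : q i = a i + q (i + 1) := hsplit i (by omega)
  have e2 : q (i + 1) = a (i + 1) + q (i + 1 + 1) := hsplit (i + 1) hjn
  nlinarith [hqnneg (i + 1), hqnneg (i + 1 + 1), hanneg i, hanneg (i + 1)]
end

section
/- Let n ≥ 1, p ∈ (0,1), q := 1-p, p_j := C(n,j)p^j q^{n-j}, q_j := Σ_{k=j}^n p_k, and j* := ⌊(n+1)p⌋ + 1. For j* ≤ j ≤ n define y_j := j - 1/2 + q_j/p_{j-1} + (q_j/p_{j-1} - q_j/p_j)/ln(p_{j-1}/p_j). Then j - 1 < y_j < j - 1/2 for every integer j with j* ≤ j ≤ n. -/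
/-!
Past the mode, i.e. for `j > (n + 1) p`, the binomial terms decrease, and since the ratio
`p_{k+1} / p_k = (n - k) p / ((k + 1) q)` is decreasing in `k`, the tail `q_j` is dominated by the
geometric series with ratio `r = p_j / p_{j-1}`: `q_j (1 - r) ≤ p_j`. Writing `x = p_{j-1} / p_j > 1`
and `s = q_j / p_{j-1}`, this reads `s (x - 1) ≤ 1`, and `y_j - (j - 1/2) = s - s (x - 1) / log x`.
The bound `log x < x - 1` makes this negative, and `log x > 2 (x - 1) / (x + 1)` together with
`s (x - 1) ≤ 1` makes it larger than `-1/2`.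
-/

open Finset Real

lemma two_mul_sub_one_div_add_one_lt_log {x : ℝ} (hx : 1 < x) :
    2 * (x - 1) / (x + 1) < log x := by
  have hsum := hasSum_log_one_add (sub_nonneg.2 hx.le)
  have hle := sum_le_hasSum (range 2) (fun k _ => by positivity) hsum
  rw [add_sub_cancel] at hle
  simp only [sum_range_succ, sum_range_zero] at hle
  norm_num at hle
  have hpos : 0 < (x - 1) / (x - 1 + 2) := div_pos (by linarith) (by linarith)
  rw [show 2 * (x - 1) / (x + 1) = 2 * ((x - 1) / (x - 1 + 2)) by ring_nf]
  linarith [pow_pos hpos 3]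

lemma lt_mul_sub_one_div_log {x s : ℝ} (hx : 1 < x) (hs : 0 < s) :
    s < s * (x - 1) / log x := by
  rw [lt_div_iff₀ (log_pos hx)]
  exact mul_lt_mul_of_pos_left (log_lt_sub_one_of_pos (by linarith) hx.ne') hs

lemma mul_sub_one_div_log_lt {x s : ℝ} (hx : 1 < x) (hs : 0 < s) (hsx : s * (x - 1) ≤ 1) :
    s * (x - 1) / log x < s + 1 / 2 := by
  rw [div_lt_iff₀ (log_pos hx)]
  calc s * (x - 1) ≤ (s + 1 / 2) * (2 * (x - 1) / (x + 1)) := by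
        rw [mul_div_assoc', le_div_iff₀ (by linarith)]
        nlinarith
    _ < (s + 1 / 2) * log x := by
        gcongr
        exact two_mul_sub_one_div_add_one_lt_log hx

lemma div_add_div_sub_div_div_log_mem_Ioo {A B S : ℝ} (hB : 0 < B) (hBA : B < A) (hS : 0 < S)
    (hSAB : S * (A - B) ≤ A * B) :
    S / A + (S / A - S / B) / log (A / B) ∈ Set.Ioo (-(1 / 2)) 0 := by
  have hA : 0 < A := hB.trans hBA
  have hx : 1 < A / B := (one_lt_div hB).2 hBA
  have hs : 0 < S / A := by positivity
  have hsx : S / A * (A / B - 1) ≤ 1 := by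
    rw [show S / A * (A / B - 1) = S * (A - B) / (A * B) by field_simp]
    exact (div_le_one (by positivity)).2 hSAB
  have hexpr : S / A + (S / A - S / B) / log (A / B) =
      S / A - S / A * (A / B - 1) / log (A / B) := by
    rw [show S / A - S / B = -(S / A * (A / B - 1)) by field_simp; ring, neg_div]
    ring
  rw [hexpr]
  exact ⟨by linarith [mul_sub_one_div_log_lt hx hs hsx], by linarith [lt_mul_sub_one_div_log hx hs]⟩

lemma sum_Icc_mul_one_sub_le {f : ℕ → ℝ} {r : ℝ} {j n : ℕ} (hjn : j ≤ n) (hr : 0 ≤ r)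
    (hfn : 0 ≤ f n) (hf : ∀ k, j ≤ k → k < n → f (k + 1) ≤ r * f k) :
    (∑ k ∈ Icc j n, f k) * (1 - r) ≤ f j := by
  obtain ⟨N, rfl⟩ := Nat.exists_eq_add_of_le hjn
  rw [← Ico_add_one_right_eq_Icc, sum_Ico_eq_sum_range, show j + N + 1 - j = N + 1 by omega]
  have hshift : ∑ m ∈ range N, f (j + (m + 1)) ≤ r * ∑ m ∈ range N, f (j + m) := by
    rw [mul_sum]
    exact sum_le_sum fun m hm => hf (j + m) (by omega) (by simp at hm; omega)
  have hfirst := sum_range_succ' (fun m => f (j + m)) N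
  have hlast := sum_range_succ (fun m => f (j + m)) N
  simp only [add_zero] at hfirst
  nlinarith

def binomTerm (n : ℕ) (p q : ℝ) (j : ℕ) : ℝ := n.choose j * p ^ j * q ^ (n - j)

lemma binomTerm_pos {n j : ℕ} {p q : ℝ} (hp : 0 < p) (hq : 0 < q) (hj : j ≤ n) :
    0 < binomTerm n p q j := by
  have := Nat.choose_pos hj
  unfold binomTerm
  positivity

lemma binomTerm_succ_mul {n i : ℕ} (p q : ℝ) (hi : i < n) :
    binomTerm n p q (i + 1) * ((i + 1) * q) = binomTerm n p q i * ((n - i) * p) := by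
  have hchoose : (n.choose (i + 1) : ℝ) * (i + 1) = n.choose i * (n - i) := by
    have h := congrArg (Nat.cast : ℕ → ℝ) (Nat.choose_succ_right_eq n i)
    push_cast [Nat.cast_sub hi.le] at h
    exact h
  have hpow : q ^ (n - i) = q ^ (n - (i + 1)) * q := by
    rw [← pow_succ]; congr 1; omega
  unfold binomTerm
  rw [hpow]
  linear_combination (p ^ i * p * q ^ (n - (i + 1)) * q) * hchoose

-- Log-concavity: `binomTerm (k + 1) / binomTerm k` is antitone in `k`.
lemma binomTerm_succ_mul_le {n i k : ℕ} {p q : ℝ} (hp : 0 < p) (hq : 0 < q) (hik : i ≤ k)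
    (hk : k < n) :
    binomTerm n p q (k + 1) * binomTerm n p q i ≤ binomTerm n p q (i + 1) * binomTerm n p q k := by
  have hbi := binomTerm_pos hp hq (hik.trans hk.le)
  have hbk := binomTerm_pos hp hq hk.le
  have hrk := binomTerm_succ_mul p q hk
  have hri := binomTerm_succ_mul p q (hik.trans_lt hk)
  have hik' : (i : ℝ) ≤ k := by exact_mod_cast hik
  have hpos : 0 < ((k : ℝ) + 1) * q * ((i + 1) * q) := by positivity
  refine le_of_mul_le_mul_right ?_ hpos
  calc binomTerm n p q (k + 1) * binomTerm n p q i * (((k : ℝ) + 1) * q * ((i + 1) * q))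
      = binomTerm n p q k * binomTerm n p q i * p * q * ((n - k) * (i + 1)) := by
        linear_combination (binomTerm n p q i * ((i + 1) * q)) * hrk
    _ ≤ binomTerm n p q k * binomTerm n p q i * p * q * ((n - i) * (k + 1)) :=
        mul_le_mul_of_nonneg_left (by nlinarith) (by positivity)
    _ = binomTerm n p q (i + 1) * binomTerm n p q k * (((k : ℝ) + 1) * q * ((i + 1) * q)) := by
        linear_combination (-(binomTerm n p q k * ((k + 1) * q))) * hri

lemma binomTerm_succ_lt {n i : ℕ} {p : ℝ} (hp : p ∈ Set.Ioo (0 : ℝ) 1) (hi : i < n)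
    (hmode : (n + 1) * p < i + 1) :
    binomTerm n p (1 - p) (i + 1) < binomTerm n p (1 - p) i := by
  obtain ⟨hp0, hp1⟩ := hp
  have hq : 0 < 1 - p := by linarith
  have hbi := binomTerm_pos hp0 hq hi.le
  have hrec := binomTerm_succ_mul p (1 - p) hi
  refine lt_of_mul_lt_mul_right (a := ((i : ℝ) + 1) * (1 - p)) ?_ (by positivity)
  rw [hrec]
  exact mul_lt_mul_of_pos_left (by linarith) hbi

lemma sum_Icc_binomTerm_mul_sub_le {n i : ℕ} {p q : ℝ} (hp : 0 < p) (hq : 0 < q) (hi : i < n) :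
    (∑ k ∈ Icc (i + 1) n, binomTerm n p q k) * (binomTerm n p q i - binomTerm n p q (i + 1)) ≤
      binomTerm n p q i * binomTerm n p q (i + 1) := by
  have hbi := binomTerm_pos hp hq hi.le
  have htail := sum_Icc_mul_one_sub_le (r := binomTerm n p q (i + 1) / binomTerm n p q i) hi
    (by have := binomTerm_pos hp hq hi; positivity) (binomTerm_pos hp hq le_rfl).le
    fun k hik hk => by
      rw [div_mul_eq_mul_div, le_div_iff₀ hbi]
      exact binomTerm_succ_mul_le hp hq (by omega) hk
  calc _ = (∑ k ∈ Icc (i + 1) n, binomTerm n p q k) *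
        (1 - binomTerm n p q (i + 1) / binomTerm n p q i) * binomTerm n p q i := by
          field_simp
    _ ≤ _ := by rw [mul_comm (binomTerm n p q i)]; gcongr

theorem stmt_14_general (n : ℕ) (p : ℝ) (hp : p ∈ Set.Ioo (0 : ℝ) 1)
    (q : ℝ) (hq : q = 1 - p)
    (pm : ℕ → ℝ) (hpm : ∀ j, pm j = (n.choose j : ℝ) * p ^ j * q ^ (n - j))
    (Q : ℕ → ℝ) (hQ : ∀ j, Q j = ∑ k ∈ Finset.Icc j n, pm k)
    (jstar : ℕ) (hjstar : jstar = ⌊((n : ℝ) + 1) * p⌋₊ + 1) :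
    ∀ j : ℕ, jstar ≤ j → j ≤ n →
      (j : ℝ) - 1 <
        (j : ℝ) - 1 / 2 + Q j / pm (j - 1) +
          (Q j / pm (j - 1) - Q j / pm j) / Real.log (pm (j - 1) / pm j) ∧
      (j : ℝ) - 1 / 2 + Q j / pm (j - 1) +
          (Q j / pm (j - 1) - Q j / pm j) / Real.log (pm (j - 1) / pm j) <
        (j : ℝ) - 1 / 2 := by
  intro j hj hjn
  obtain ⟨i, rfl⟩ : ∃ i, j = i + 1 := ⟨j - 1, by omega⟩
  have hmode : ((n : ℝ) + 1) * p < i + 1 := by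
    have hfloor : ⌊((n : ℝ) + 1) * p⌋₊ < i + 1 := by omega
    exact_mod_cast (Nat.floor_lt (mul_pos (by positivity) hp.1).le).1 hfloor
  have hq0 : 0 < q := by linarith [hp.2]
  have hpm' : pm = binomTerm n p q := funext hpm
  subst hq hpm'
  have hQpos : 0 < Q (i + 1) := by
    rw [hQ]
    exact sum_pos (fun k hk => binomTerm_pos hp.1 hq0 (mem_Icc.1 hk).2) ⟨i + 1, mem_Icc.2 ⟨le_rfl, hjn⟩⟩
  obtain ⟨hlow, hup⟩ := div_add_div_sub_div_div_log_mem_Ioo (binomTerm_pos hp.1 hq0 hjn)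
    (binomTerm_succ_lt hp (by omega) hmode) hQpos
    (by rw [hQ]; exact sum_Icc_binomTerm_mul_sub_le hp.1 hq0 (by omega))
  simp only [Nat.add_sub_cancel]
  push_cast
  constructor <;> linarith

theorem stmt_14 (n : ℕ) (hn : 1 ≤ n) (p : ℝ) (hp : p ∈ Set.Ioo (0 : ℝ) 1)
    (q : ℝ) (hq : q = 1 - p)
    (pm : ℕ → ℝ) (hpm : ∀ j, pm j = (n.choose j : ℝ) * p ^ j * q ^ (n - j))
    (Q : ℕ → ℝ) (hQ : ∀ j, Q j = ∑ k ∈ Finset.Icc j n, pm k)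
    (jstar : ℕ) (hjstar : jstar = ⌊((n : ℝ) + 1) * p⌋₊ + 1) :
    ∀ j : ℕ, jstar ≤ j → j ≤ n →
      (j : ℝ) - 1 <
        (j : ℝ) - 1 / 2 + Q j / pm (j - 1) +
          (Q j / pm (j - 1) - Q j / pm j) / Real.log (pm (j - 1) / pm j) ∧
      (j : ℝ) - 1 / 2 + Q j / pm (j - 1) +
          (Q j / pm (j - 1) - Q j / pm j) / Real.log (pm (j - 1) / pm j) <
        (j : ℝ) - 1 / 2 :=
  stmt_14_general n p hp q hq pm hpm Q hQ jstar hjstar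
end

section
/- Let n ≥ 1, p ∈ (0,1), p_j and q_j as usual for the binomial(n,p) distribution, and j* := ⌊(n+1)p⌋ + 1. For j* ≤ j ≤ n-1 define r_j := (1/p_j - 1/p_{j-1})/ln(p_{j-1}/p_j), x_j := j - 1/2 + q_j/p_j + (q_j/p_{j-1} - q_j/p_j)/ln(p_{j-1}/p_j), and y_{j+1} := j + 1/2 + q_{j+1}/p_j + (q_{j+1}/p_j - q_{j+1}/p_{j+1})/ln(p_j/p_{j+1}). Then x_j < y_{j+1}, equivalently q_j·r_j > q_{j+1}·r_{j+1}. -/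
lemma aux_slope16 (u v : ℝ) (hu : 0 < u) (huv : u ≤ v) (hv : v < 1) :
    (1 - v) * Real.log u ≤ (1 - u) * Real.log v := by
  have hv0 : 0 < v := lt_of_lt_of_le hu huv
  have h1 : Real.log (u / v) ≤ u / v - 1 := Real.log_le_sub_one_of_pos (by positivity)
  have h2 : Real.log (1 / v) ≤ 1 / v - 1 := Real.log_le_sub_one_of_pos (by positivity)
  rw [Real.log_div (ne_of_gt hu) (ne_of_gt hv0)] at h1
  rw [one_div, Real.log_inv] at h2
  have h1' : v * (Real.log u - Real.log v) ≤ u - v := by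
    have := mul_le_mul_of_nonneg_left h1 hv0.le
    have e : v * (u / v - 1) = u - v := by field_simp
    linarith
  have h2' : -(v * Real.log v) ≤ 1 - v := by
    have := mul_le_mul_of_nonneg_left h2 hv0.le
    have e : v * (v⁻¹ - 1) = 1 - v := by field_simp
    linarith
  nlinarith [mul_le_mul_of_nonneg_left h1' (by linarith : (0:ℝ) ≤ 1 - v),
    mul_le_mul_of_nonneg_left h2' (by linarith : (0:ℝ) ≤ v - u), hv0]

set_option maxHeartbeats 1000000 in
theorem stmt_16 (n : ℕ) (hn : 1 ≤ n) (p : ℝ) (hp : p ∈ Set.Ioo (0 : ℝ) 1)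
    (pm : ℕ → ℝ) (hpm : ∀ j, pm j = (n.choose j : ℝ) * p ^ j * (1 - p) ^ (n - j))
    (Q : ℕ → ℝ) (hQ : ∀ j, Q j = ∑ k ∈ Finset.Icc j n, pm k)
    (r : ℕ → ℝ)
    (hr : ∀ j, r j = (1 / pm j - 1 / pm (j - 1)) / Real.log (pm (j - 1) / pm j))
    (jstar : ℕ) (hjstar : jstar = ⌊((n : ℝ) + 1) * p⌋₊ + 1) :
    ∀ j : ℕ, jstar ≤ j → j + 1 ≤ n →
      ((j : ℝ) - 1 / 2 + Q j / pm j +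
          (Q j / pm (j - 1) - Q j / pm j) / Real.log (pm (j - 1) / pm j) <
        (j : ℝ) + 1 / 2 + Q (j + 1) / pm j +
          (Q (j + 1) / pm j - Q (j + 1) / pm (j + 1)) / Real.log (pm j / pm (j + 1))) ∧
      Q j * r j > Q (j + 1) * r (j + 1) := by
  obtain ⟨hp0, hp1⟩ := hp
  have h1p : (0:ℝ) < 1 - p := by linarith
  intro j hj1 hj2
  -- j ≥ 1
  obtain ⟨m, rfl⟩ : ∃ m, j = m + 1 := ⟨j - 1, by omega⟩
  have hmn : m + 2 ≤ n := by omega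
  -- (n+1)p < m+1
  have hfl : ((n:ℝ) + 1) * p < (m:ℝ) + 1 := by
    have h1 : ((n:ℝ) + 1) * p < (⌊((n : ℝ) + 1) * p⌋₊ : ℝ) + 1 := Nat.lt_floor_add_one _
    have h2 : (⌊((n : ℝ) + 1) * p⌋₊ : ℝ) + 1 ≤ (m:ℝ) + 1 := by
      have : ⌊((n : ℝ) + 1) * p⌋₊ + 1 ≤ m + 1 := by omega
      exact_mod_cast this
    linarith
  -- positivity of pm
  have pm_pos : ∀ k, k ≤ n → 0 < pm k := by
    intro k hk
    rw [hpm]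
    have hc : 0 < (n.choose k : ℝ) := by exact_mod_cast Nat.choose_pos hk
    positivity
  -- ratio identity
  have hratio : ∀ i, i < n →
      pm (i + 1) * (((i:ℝ) + 1) * (1 - p)) = pm i * ((((n:ℝ) - i) * p)) := by
    intro i hi
    have hc : ((n.choose (i + 1) : ℝ)) * ((i:ℝ) + 1) = (n.choose i : ℝ) * ((n:ℝ) - (i:ℝ)) := by
      have h := Nat.choose_succ_right_eq n i
      have h' : ((n.choose (i + 1) * (i + 1) : ℕ) : ℝ) = ((n.choose i * (n - i) : ℕ) : ℝ) := by
        exact_mod_cast congrArg (fun x : ℕ => (x : ℝ)) h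
      push_cast [Nat.cast_sub hi.le] at h'
      linarith
    have hpow : (1 - p) ^ (n - i) = (1 - p) ^ (n - (i + 1)) * (1 - p) := by
      rw [← pow_succ]
      congr 1
      omega
    rw [hpm, hpm, hpow]
    have hpi : p ^ (i + 1) = p ^ i * p := pow_succ p i
    rw [hpi]
    linear_combination (p ^ i * p * (1 - p) ^ (n - (i + 1)) * (1 - p)) * hc
  -- pm decreasing on the relevant range
  have pm_dec : ∀ i, i < n → ((n:ℝ) + 1) * p < (i:ℝ) + 1 → pm (i + 1) < pm i := by
    intro i hi hip
    have hq := hratio i hi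
    have hpi : 0 < pm i := pm_pos i hi.le
    have hlt : (((n:ℝ) - i) * p) < ((i:ℝ) + 1) * (1 - p) := by nlinarith
    have h1 : pm (i + 1) * (((i:ℝ) + 1) * (1 - p)) < pm i * (((i:ℝ) + 1) * (1 - p)) := by
      rw [hq]
      exact mul_lt_mul_of_pos_left hlt hpi
    have hpos : 0 < ((i:ℝ) + 1) * (1 - p) := by positivity
    exact lt_of_mul_lt_mul_right h1 hpos.le
  -- cross inequality: ratios decrease
  have hcross : ∀ s t : ℕ, s ≤ t → t < n → pm (t + 1) * pm s ≤ pm t * pm (s + 1) := by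
    intro s t hst htn
    have hsn : s < n := lt_of_le_of_lt hst htn
    have Et := hratio t htn
    have Es := hratio s hsn
    have hps : 0 < pm s := pm_pos s hsn.le
    have hpt : 0 < pm t := pm_pos t htn.le
    have hct : 0 < ((t:ℝ) + 1) * (1 - p) := by positivity
    have hcs : 0 < ((s:ℝ) + 1) * (1 - p) := by positivity
    have hstR : (s:ℝ) ≤ (t:ℝ) := by exact_mod_cast hst
    have htnR : (t:ℝ) ≤ (n:ℝ) := by exact_mod_cast htn.le
    have key : ((n:ℝ) - t) * ((s:ℝ) + 1) ≤ ((n:ℝ) - s) * ((t:ℝ) + 1) := by nlinarith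
    -- multiply target by positive ((t+1)(1-p))((s+1)(1-p))
    have h1 : pm (t + 1) * pm s * ((((t:ℝ) + 1) * (1 - p)) * (((s:ℝ) + 1) * (1 - p)))
        ≤ pm t * pm (s + 1) * ((((t:ℝ) + 1) * (1 - p)) * (((s:ℝ) + 1) * (1 - p))) := by
      have e1 : pm (t + 1) * pm s * ((((t:ℝ) + 1) * (1 - p)) * (((s:ℝ) + 1) * (1 - p)))
          = (pm t * pm s) * ((((n:ℝ) - t) * p) * (((s:ℝ) + 1) * (1 - p))) := by
        linear_combination (pm s * (((s:ℝ) + 1) * (1 - p))) * Et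
      have e2 : pm t * pm (s + 1) * ((((t:ℝ) + 1) * (1 - p)) * (((s:ℝ) + 1) * (1 - p)))
          = (pm t * pm s) * ((((n:ℝ) - s) * p) * (((t:ℝ) + 1) * (1 - p))) := by
        linear_combination (pm t * (((t:ℝ) + 1) * (1 - p))) * Es
      rw [e1, e2]
      have hmono : (((n:ℝ) - t) * p) * (((s:ℝ) + 1) * (1 - p))
          ≤ (((n:ℝ) - s) * p) * (((t:ℝ) + 1) * (1 - p)) := by
        nlinarith [mul_le_mul_of_nonneg_left key (mul_pos hp0 h1p).le]
      exact mul_le_mul_of_nonneg_left hmono (by positivity)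
    exact le_of_mul_le_mul_right h1 (by positivity)
  -- abbreviations
  set a := pm m with ha
  set b := pm (m + 1) with hb
  set c := pm (m + 2) with hc
  have ha0 : 0 < a := pm_pos m (by omega)
  have hb0 : 0 < b := pm_pos (m + 1) (by omega)
  have hc0 : 0 < c := pm_pos (m + 2) (by omega)
  have hba : b < a := pm_dec m (by omega) hfl
  have hcb : c < b := by
    have := pm_dec (m + 1) (by omega) (by push_cast; linarith)
    simpa using this
  have hlogconc : c * a ≤ b * b := by
    have := hcross m (m + 1) (by omega) (by omega)
    simpa [mul_comm] using this
  -- logs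
  have hA1 : 0 < Real.log (a / b) := Real.log_pos (by rw [lt_div_iff₀ hb0]; linarith)
  have hA2 : 0 < Real.log (b / c) := Real.log_pos (by rw [lt_div_iff₀ hc0]; linarith)
  set A1 := Real.log (a / b) with hA1d
  set A2 := Real.log (b / c) with hA2d
  -- h monotone: (1 - c/b)/A2 ≤ (1 - b/a)/A1
  have hH : (1 - c / b) / A2 ≤ (1 - b / a) / A1 := by
    have hu : 0 < c / b := by positivity
    have huv : c / b ≤ b / a := by
      rw [div_le_div_iff₀ hb0 ha0]
      linarith [hlogconc]
    have hv : b / a < 1 := by rw [div_lt_one ha0]; exact hba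
    have haux := aux_slope16 (c / b) (b / a) hu huv hv
    have e1 : Real.log (c / b) = -A2 := by
      rw [hA2d, Real.log_div hc0.ne' hb0.ne', Real.log_div hb0.ne' hc0.ne']
      ring
    have e2 : Real.log (b / a) = -A1 := by
      rw [hA1d, Real.log_div hb0.ne' ha0.ne', Real.log_div ha0.ne' hb0.ne']
      ring
    rw [e1, e2] at haux
    rw [div_le_div_iff₀ hA2 hA1]
    nlinarith [haux]
  have hH1pos : 0 < (1 - b / a) / A1 := by
    have : b / a < 1 := by rw [div_lt_one ha0]; exact hba
    apply div_pos (by linarith) hA1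
  have hH2pos : 0 < (1 - c / b) / A2 := by
    have : c / b < 1 := by rw [div_lt_one hb0]; exact hcb
    apply div_pos (by linarith) hA2
  -- Q positivity
  have Q_pos : ∀ k, k ≤ n → 0 < Q k := by
    intro k hk
    rw [hQ]
    apply Finset.sum_pos
    · intro i hi
      exact pm_pos i (Finset.mem_Icc.mp hi).2
    · exact ⟨k, Finset.mem_Icc.mpr ⟨le_refl k, hk⟩⟩
  have hQb : 0 < Q (m + 1) := Q_pos (m + 1) (by omega)
  have hQc : 0 < Q (m + 2) := Q_pos (m + 2) (by omega)
  -- Q recursion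
  have hQrec : Q (m + 1) = b + Q (m + 2) := by
    rw [hQ, hQ, hb]
    have hset : Finset.Icc (m + 1) n = insert (m + 1) (Finset.Icc (m + 2) n) := by
      ext x
      simp only [Finset.mem_Icc, Finset.mem_insert]
      omega
    rw [hset, Finset.sum_insert (by simp only [Finset.mem_Icc]; omega)]
  -- main comparison: Q(m+2) * b < Q(m+1) * c
  have qA : Q (m + 2) * b < Q (m + 1) * c := by
    rw [hQ (m + 2), hQ (m + 1), Finset.sum_mul, Finset.sum_mul]
    calc ∑ k ∈ Finset.Icc (m + 2) n, pm k * b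
        ≤ ∑ k ∈ Finset.Icc (m + 2) n, pm (k - 1) * c := by
          apply Finset.sum_le_sum
          intro k hk
          rw [Finset.mem_Icc] at hk
          have h := hcross (m + 1) (k - 1) (by omega) (by omega)
          rwa [show k - 1 + 1 = k by omega, show m + 1 + 1 = m + 2 from rfl] at h
      _ = ∑ k ∈ Finset.Icc (m + 1) (n - 1), pm k * c := by
          have hmap : Finset.Icc (m + 2) n
              = Finset.map ⟨fun x => x + 1, add_left_injective 1⟩ (Finset.Icc (m + 1) (n - 1)) := by
            ext x
            simp only [Finset.mem_Icc, Finset.mem_map, Function.Embedding.coeFn_mk]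
            constructor
            · intro hx; exact ⟨x - 1, by omega, by omega⟩
            · rintro ⟨y, hy, rfl⟩; omega
          rw [hmap, Finset.sum_map]
          simp
      _ < ∑ k ∈ Finset.Icc (m + 1) n, pm k * c := by
          apply Finset.sum_lt_sum_of_subset
            (Finset.Icc_subset_Icc_right (by omega)) (i := n)
            (Finset.mem_Icc.mpr ⟨by omega, le_refl n⟩)
            (by simp only [Finset.mem_Icc]; omega)
            (mul_pos (pm_pos n le_rfl) hc0)
          intro k hk _
          rw [Finset.mem_Icc] at hk
          exact (mul_pos (pm_pos k hk.2) hc0).le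
  -- second goal
  have G2 : Q (m + 2) * r (m + 2) < Q (m + 1) * r (m + 1) := by
    rw [hr (m + 1), hr (m + 2)]
    have d1 : m + 1 - 1 = m := rfl
    have d2 : m + 2 - 1 = m + 1 := rfl
    rw [d1, d2, ← ha, ← hb, ← hc, ← hA1d, ← hA2d]
    have key1 : Q (m + 2) * ((1 / c - 1 / b) / A2) = (Q (m + 2) / c) * ((1 - c / b) / A2) := by
      have hx : Q (m + 2) * (1 / c - 1 / b) = (Q (m + 2) / c) * (1 - c / b) := by
        field_simp
      calc Q (m + 2) * ((1 / c - 1 / b) / A2) = (Q (m + 2) * (1 / c - 1 / b)) / A2 := by ring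
        _ = ((Q (m + 2) / c) * (1 - c / b)) / A2 := by rw [hx]
        _ = (Q (m + 2) / c) * ((1 - c / b) / A2) := by ring
    have key2 : Q (m + 1) * ((1 / b - 1 / a) / A1) = (Q (m + 1) / b) * ((1 - b / a) / A1) := by
      have hx : Q (m + 1) * (1 / b - 1 / a) = (Q (m + 1) / b) * (1 - b / a) := by
        field_simp
      calc Q (m + 1) * ((1 / b - 1 / a) / A1) = (Q (m + 1) * (1 / b - 1 / a)) / A1 := by ring
        _ = ((Q (m + 1) / b) * (1 - b / a)) / A1 := by rw [hx]
        _ = (Q (m + 1) / b) * ((1 - b / a) / A1) := by ring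
    rw [key1, key2]
    have hAdiv : Q (m + 2) / c < Q (m + 1) / b := by
      rw [div_lt_div_iff₀ hc0 hb0]
      linarith
    calc Q (m + 2) / c * ((1 - c / b) / A2)
        ≤ Q (m + 2) / c * ((1 - b / a) / A1) := by
          apply mul_le_mul_of_nonneg_left hH (by positivity)
      _ < Q (m + 1) / b * ((1 - b / a) / A1) := by
          apply mul_lt_mul_of_pos_right hAdiv hH1pos
  refine ⟨?_, G2⟩
  -- first goal from second by algebra
  have d1 : m + 1 - 1 = m := rfl
  rw [d1, show m + 1 + 1 = m + 2 from rfl, ← hA1d]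
  have e1 : (Q (m + 1) / a - Q (m + 1) / b) / A1 = -(Q (m + 1) * r (m + 1)) := by
    rw [hr (m + 1)]
    have d : m + 1 - 1 = m := rfl
    rw [d, ← ha, ← hb, ← hA1d]
    field_simp
    ring
  have e2 : (Q (m + 2) / b - Q (m + 2) / c) / A2 = -(Q (m + 2) * r (m + 2)) := by
    rw [hr (m + 2)]
    have d : m + 2 - 1 = m + 1 := rfl
    rw [d, ← hb, ← hc, ← hA2d]
    field_simp
    ring
  have eQ : Q (m + 1) / b = 1 + Q (m + 2) / b := by
    rw [hQrec, add_div, div_self hb0.ne']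
  rw [e1, e2, eQ]
  push_cast
  linarith
end

section
/- Let n ≥ 1, p ∈ (0,1), q := 1-p, and B_n ~ binomial(n, p), with q_j := P(B_n ≥ j). Let Q_n^Lin be the linear interpolation over ℤ of j ↦ q_j, and Q_n^LC(x) := q_j^{1-(x-j)} q_{j+1}^{x-j} for j ≤ x ≤ j+1 (the least log-concave majorant of the tail restricted to ℤ, extended by geometric interpolation). Let u* ∈ (0,1) be the unique root of ln((1-u)/(-ln u)) - 1 - (1/2)(1+u)(ln u)/(1-u) = 0, u** := u*/(1 - u*), and j** := ⌊(n - u** q/p)/(1 + u** q/p)⌋. Then Q_n^Lin(x + 1/2) ≤ Q_n^LC(x) for all real x ≤ j** + 1. -/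
/-!
For `j ≤ j**` the binomial weights satisfy `b (j + 1) ≥ u** b j`, and since `q_j = b j + q_{j+1}`
this gives `q_{j+1} ≥ u* q_j`. On a cell `x = j + t` with `t < 1/2`, dividing by `q_j` and writing
`r = q_{j+1} / q_j ∈ [u*, 1]`, the claim becomes `(1/2 - t) + (1/2 + t) r ≤ r ^ t`. The left side is
affine and the right side concave in `r`, so it suffices to check `r = 1`, where it is an equality,
and `r = u*`, where it says that the line `t ↦ (1 + u*)/2 - t (1 - u*)` lies below `t ↦ u* ^ t`.
The equation defining `u*` says exactly that this line is tangent to the convex function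
`t ↦ u* ^ t`. For `t ≥ 1/2` the claim follows from the monotonicity of `q`.
-/

open Real

noncomputable def binomWeight (n : ℕ) (p q : ℝ) (k : ℕ) : ℝ := n.choose k * p ^ k * q ^ (n - k)

noncomputable def binomTail (n : ℕ) (p q : ℝ) (j : ℤ) : ℝ :=
  if j < 0 then 1 else ∑ k ∈ Finset.Icc j.toNat n, binomWeight n p q k

noncomputable def linInterp (f : ℤ → ℝ) (x : ℝ) : ℝ :=
  (1 - (x - ⌊x⌋)) * f ⌊x⌋ + (x - ⌊x⌋) * f (⌊x⌋ + 1)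

noncomputable def geomInterp (f : ℤ → ℝ) (x : ℝ) : ℝ :=
  f ⌊x⌋ ^ (1 - (x - ⌊x⌋)) * f (⌊x⌋ + 1) ^ (x - ⌊x⌋)

section BinomialTail

variable {n : ℕ} {p q : ℝ}

lemma binomWeight_nonneg (hp : 0 ≤ p) (hq : 0 ≤ q) (k : ℕ) : 0 ≤ binomWeight n p q k := by
  unfold binomWeight; positivity

lemma binomWeight_succ_mul {m : ℕ} (hm : m < n) :
    binomWeight n p q (m + 1) * ((m + 1) * q) = binomWeight n p q m * ((n - m) * p) := by
  have hchoose := congrArg (Nat.cast : ℕ → ℝ) (Nat.choose_succ_right_eq n m)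
  push_cast [Nat.cast_sub hm.le] at hchoose
  obtain ⟨k, rfl⟩ : ∃ k, n = m + 1 + k := ⟨n - (m + 1), by omega⟩
  have hk : m + 1 + k - m = k + 1 := by omega
  simp only [binomWeight, Nat.add_sub_cancel_left, hk]
  linear_combination p ^ m * p * q ^ k * q * hchoose

lemma binomTail_natCast (m : ℕ) :
    binomTail n p q m = ∑ k ∈ Finset.Icc m n, binomWeight n p q k := by
  simp [binomTail]

lemma binomTail_of_nonpos (hpq : p + q = 1) {j : ℤ} (hj : j ≤ 0) : binomTail n p q j = 1 := by
  rcases hj.lt_or_eq with hj | rfl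
  · simp [binomTail, hj]
  · rw [← Nat.cast_zero, binomTail_natCast, ← Nat.range_succ_eq_Icc_zero]
    simp only [binomWeight]
    have hbinom := add_pow p q n
    rw [hpq, one_pow] at hbinom
    rw [hbinom]
    exact Finset.sum_congr rfl fun k _ => by ring

lemma binomTail_nonneg (hp : 0 ≤ p) (hq : 0 ≤ q) (j : ℤ) : 0 ≤ binomTail n p q j := by
  unfold binomTail
  split_ifs
  · exact zero_le_one
  · exact Finset.sum_nonneg fun k _ => binomWeight_nonneg hp hq k

lemma binomTail_antitone (hp : 0 ≤ p) (hq : 0 ≤ q) (hpq : p + q = 1) :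
    Antitone (binomTail n p q) := by
  refine antitone_int_of_succ_le fun j => ?_
  rcases lt_or_ge j 0 with hj | hj
  · rw [binomTail_of_nonpos hpq hj.le, binomTail_of_nonpos hpq (by omega)]
  · lift j to ℕ using hj
    rw [← Nat.cast_succ, binomTail_natCast, binomTail_natCast]
    exact Finset.sum_le_sum_of_subset_of_nonneg (Finset.Icc_subset_Icc_left (by omega))
      fun k _ _ => binomWeight_nonneg hp hq k

lemma binomTail_natCast_eq_add {m : ℕ} (hm : m ≤ n) :
    binomTail n p q m = binomWeight n p q m + binomTail n p q (m + 1 : ℕ) := by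
  rw [binomTail_natCast, binomTail_natCast, Finset.Icc_eq_cons_Ioc hm, Finset.sum_cons,
    ← Finset.Icc_add_one_left_eq_Ioc]

lemma mul_binomTail_le_succ {u : ℝ} (hu0 : 0 < u) (hu1 : u < 1) (hp : 0 ≤ p) (hq : 0 < q)
    {m : ℕ} (h : u / (1 - u) * (m + 1) * q ≤ (n - m) * p) :
    u * binomTail n p q m ≤ binomTail n p q (m + 1) := by
  set v := u / (1 - u)
  have hv : v * (1 - u) = u := div_mul_cancel₀ u (by linarith)
  have hmq : 0 < ((m : ℝ) + 1) * q := by positivity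
  have hmn : m < n := by
    by_contra! hnm
    have hnm' : (n - m : ℝ) * p ≤ 0 :=
      mul_nonpos_of_nonpos_of_nonneg (by linarith [(Nat.cast_le (α := ℝ)).mpr hnm]) hp
    have hv0 : 0 < v * ((m + 1) * q) := mul_pos (div_pos hu0 (by linarith)) hmq
    linarith [mul_assoc v (m + 1 : ℝ) q]
  have hweight : v * binomWeight n p q m ≤ binomWeight n p q (m + 1) := by
    refine le_of_mul_le_mul_right ?_ hmq
    rw [binomWeight_succ_mul hmn]
    nlinarith [binomWeight_nonneg (n := n) hp hq.le m]
  have hsingle : binomWeight n p q (m + 1) ≤ binomTail n p q (m + 1 : ℕ) := by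
    rw [binomTail_natCast]
    exact Finset.single_le_sum (fun k _ => binomWeight_nonneg hp hq.le k)
      (Finset.mem_Icc.mpr ⟨le_rfl, hmn⟩)
  rw [binomTail_natCast_eq_add hmn.le]
  push_cast at hsingle ⊢
  nlinarith [binomWeight_nonneg (n := n) hp hq.le m]

lemma mul_binomTail_le_succ_of_le_floor {u : ℝ} (hu0 : 0 < u) (hu1 : u < 1) (hp : 0 < p)
    (hq : 0 < q) (hpq : p + q = 1) {j : ℤ}
    (hj : j ≤ ⌊((n : ℝ) - u / (1 - u) * q / p) / (1 + u / (1 - u) * q / p)⌋) :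
    u * binomTail n p q j ≤ binomTail n p q (j + 1) := by
  rcases lt_or_ge j 0 with hj0 | hj0
  · rw [binomTail_of_nonpos hpq hj0.le, binomTail_of_nonpos hpq (by omega)]
    linarith
  lift j to ℕ using hj0
  set c := u / (1 - u) * q / p
  have hc : 0 < c := div_pos (mul_pos (div_pos hu0 (by linarith)) hq) hp
  have hjc : (j : ℝ) * (1 + c) ≤ n - c := by
    rw [← le_div_iff₀ (by linarith)]
    exact_mod_cast Int.le_floor.mp hj
  refine mul_binomTail_le_succ hu0 hu1 hp.le hq ?_
  have hcp : c * p = u / (1 - u) * q := div_mul_cancel₀ _ hp.ne'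
  nlinarith

end BinomialTail

section Interpolation

variable (f : ℤ → ℝ)

lemma floor_intCast_add_of_mem_Ico (j : ℤ) {s : ℝ} (hs0 : 0 ≤ s) (hs1 : s < 1) :
    ⌊(j : ℝ) + s⌋ = j := by
  rw [Int.floor_intCast_add, Int.floor_eq_zero_iff.mpr ⟨hs0, hs1⟩, add_zero]

lemma linInterp_intCast_add (j : ℤ) {s : ℝ} (hs0 : 0 ≤ s) (hs1 : s < 1) :
    linInterp f (j + s) = (1 - s) * f j + s * f (j + 1) := by
  simp only [linInterp, floor_intCast_add_of_mem_Ico j hs0 hs1, add_sub_cancel_left]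

lemma geomInterp_intCast_add (j : ℤ) {s : ℝ} (hs0 : 0 ≤ s) (hs1 : s < 1) :
    geomInterp f (j + s) = f j ^ (1 - s) * f (j + 1) ^ s := by
  simp only [geomInterp, floor_intCast_add_of_mem_Ico j hs0 hs1, add_sub_cancel_left]

end Interpolation

lemma tangent_le_rpow_of_root {u : ℝ} (hu0 : 0 < u) (hu1 : u < 1)
    (hroot : log ((1 - u) / (-log u)) - 1 - (1 / 2) * ((1 + u) * log u) / (1 - u) = 0)
    (t : ℝ) : (1 + u) / 2 - t * (1 - u) ≤ u ^ t := by
  have hL : log u < 0 := log_neg hu0 hu1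
  have hL' : log u ≠ 0 := hL.ne
  have hu : 1 - u ≠ 0 := by linarith
  set A := (1 - u) / (-log u) with hA
  have hA0 : 0 < A := div_pos (by linarith) (by linarith)
  have hlogA : log A = 1 + (1 / 2) * ((1 + u) * log u) / (1 - u) := by linarith
  calc (1 + u) / 2 - t * (1 - u) = A * (t * log u - log A + 1) := by
        rw [hlogA, hA]
        field_simp
        ring
    _ ≤ exp (log A) * exp (t * log u - log A) := by
        rw [exp_log hA0]
        exact mul_le_mul_of_nonneg_left (add_one_le_exp _) hA0.le
    _ = u ^ t := by
        rw [← exp_add, add_sub_cancel, rpow_def_of_pos hu0, mul_comm]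

lemma affine_le_rpow {u : ℝ} (hu0 : 0 ≤ u) (hu1 : u < 1)
    (htan : ∀ t : ℝ, (1 + u) / 2 - t * (1 - u) ≤ u ^ t) {r t : ℝ} (hur : u ≤ r) (hr1 : r ≤ 1)
    (ht0 : 0 ≤ t) (ht1 : t ≤ 1) : (1 / 2 - t) + (1 / 2 + t) * r ≤ r ^ t := by
  have hu : 0 < 1 - u := by linarith
  have hu' : 1 - u ≠ 0 := hu.ne'
  have ha : 0 ≤ (1 - r) / (1 - u) := div_nonneg (by linarith) hu.le
  have hab : (1 - r) / (1 - u) + (r - u) / (1 - u) = 1 := by field_simp; ring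
  have hr : (1 - r) / (1 - u) * u + (r - u) / (1 - u) * 1 = r := by field_simp; ring
  have hconc := (concaveOn_rpow ht0 ht1).2 (Set.mem_Ici.mpr hu0) (Set.mem_Ici.mpr zero_le_one)
    ha (div_nonneg (by linarith) hu.le) hab
  simp only [smul_eq_mul, one_rpow] at hconc
  rw [hr] at hconc
  calc (1 / 2 - t) + (1 / 2 + t) * r
      = (1 - r) / (1 - u) * ((1 + u) / 2 - t * (1 - u)) + (r - u) / (1 - u) * 1 := by
        field_simp; ring
    _ ≤ (1 - r) / (1 - u) * u ^ t + (r - u) / (1 - u) * 1 := by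
        gcongr; exact htan t
    _ ≤ r ^ t := hconc

lemma affine_le_geomMean {u : ℝ} (hu0 : 0 ≤ u) (hu1 : u < 1)
    (htan : ∀ t : ℝ, (1 + u) / 2 - t * (1 - u) ≤ u ^ t) {a b t : ℝ} (ha : 0 ≤ a)
    (hab : u * a ≤ b) (hba : b ≤ a) (ht0 : 0 ≤ t) (ht1 : t ≤ 1) :
    (1 / 2 - t) * a + (1 / 2 + t) * b ≤ a ^ (1 - t) * b ^ t := by
  rcases ha.eq_or_lt with rfl | ha
  · obtain rfl : b = 0 := by linarith
    simp only [mul_zero, add_zero]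
    exact mul_nonneg (rpow_nonneg le_rfl _) (rpow_nonneg le_rfl _)
  obtain ⟨r, rfl⟩ : ∃ r, b = a * r := ⟨b / a, (mul_div_cancel₀ b ha.ne').symm⟩
  have hur : u ≤ r := le_of_mul_le_mul_left (by linarith) ha
  have hr1 : r ≤ 1 := le_of_mul_le_mul_left (by linarith) ha
  calc (1 / 2 - t) * a + (1 / 2 + t) * (a * r) = a * ((1 / 2 - t) + (1 / 2 + t) * r) := by ring
    _ ≤ a * r ^ t := by gcongr; exact affine_le_rpow hu0 hu1 htan hur hr1 ht0 ht1
    _ = a ^ (1 - t) * (a * r) ^ t := by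
        rw [mul_rpow ha.le (hu0.trans hur), ← mul_assoc, ← rpow_add ha, sub_add_cancel, rpow_one]

lemma affine_le_geomMean_of_half_le {a b c t : ℝ} (hcb : c ≤ b) (hb : 0 ≤ b) (hba : b ≤ a)
    (ht0 : 1 / 2 ≤ t) (ht1 : t ≤ 1) :
    (3 / 2 - t) * b + (t - 1 / 2) * c ≤ a ^ (1 - t) * b ^ t := by
  calc (3 / 2 - t) * b + (t - 1 / 2) * c ≤ b := by nlinarith
    _ = b ^ (1 - t) * b ^ t := by
        rw [← rpow_add' hb (by norm_num), sub_add_cancel, rpow_one]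
    _ ≤ a ^ (1 - t) * b ^ t := by
        gcongr

lemma linInterp_add_half_le_geomInterp {f : ℤ → ℝ} (hf : Antitone f) (hf0 : ∀ j, 0 ≤ f j)
    {u : ℝ} (hu0 : 0 ≤ u) (hu1 : u < 1) (htan : ∀ t : ℝ, (1 + u) / 2 - t * (1 - u) ≤ u ^ t)
    (j : ℤ) {t : ℝ} (ht0 : 0 ≤ t) (ht1 : t < 1) (hratio : 0 < t → u * f j ≤ f (j + 1)) :
    linInterp f (j + t + 1 / 2) ≤ geomInterp f (j + t) := by
  rw [geomInterp_intCast_add f j ht0 ht1]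
  rcases lt_or_ge t (1 / 2) with ht | ht
  · rw [add_assoc, linInterp_intCast_add f j (by linarith) (by linarith)]
    rcases ht0.eq_or_lt with rfl | htpos
    · simp only [sub_zero, rpow_one, rpow_zero, mul_one, zero_add]
      linarith [hf (Int.le_add_one le_rfl : j ≤ j + 1)]
    · convert affine_le_geomMean hu0 hu1 htan (hf0 j) (hratio htpos)
        (hf (Int.le_add_one le_rfl)) ht0 ht1.le using 1
      ring
  · have hshift : (j : ℝ) + t + 1 / 2 = ((j + 1 : ℤ) : ℝ) + (t - 1 / 2) := by push_cast; ring
    rw [hshift, linInterp_intCast_add f (j + 1) (by linarith) (by linarith)]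
    convert affine_le_geomMean_of_half_le (hf (Int.le_add_one le_rfl)) (hf0 _)
      (hf (Int.le_add_one le_rfl)) ht ht1.le using 1
    ring

theorem stmt_17_general (n : ℕ) (p : ℝ) (hp : p ∈ Set.Ioo (0 : ℝ) 1)
    (q : ℝ) (hq : q = 1 - p)
    (Qt : ℤ → ℝ)
    (hQt : ∀ j : ℤ, Qt j = if j < 0 then 1 else
      ∑ k ∈ Finset.Icc j.toNat n, (n.choose k : ℝ) * p ^ k * q ^ (n - k))
    (QLin QLC : ℝ → ℝ)
    (hQLin : ∀ x : ℝ, QLin x = (1 - (x - ⌊x⌋)) * Qt ⌊x⌋ + (x - ⌊x⌋) * Qt (⌊x⌋ + 1))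
    (hQLC : ∀ x : ℝ, QLC x = Qt ⌊x⌋ ^ (1 - (x - ⌊x⌋)) * Qt (⌊x⌋ + 1) ^ (x - ⌊x⌋))
    (ustar : ℝ) (hu : ustar ∈ Set.Ioo (0 : ℝ) 1)
    (hroot : Real.log ((1 - ustar) / (-Real.log ustar)) - 1
      - (1 / 2) * ((1 + ustar) * Real.log ustar) / (1 - ustar) = 0)
    (ustar2 : ℝ) (hu2 : ustar2 = ustar / (1 - ustar))
    (jstar2 : ℤ) (hj2 : jstar2 = ⌊((n : ℝ) - ustar2 * q / p) / (1 + ustar2 * q / p)⌋) :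
    ∀ x : ℝ, x ≤ (jstar2 : ℝ) + 1 → QLin (x + 1 / 2) ≤ QLC x := by
  obtain ⟨hp0, hp1⟩ := hp
  obtain ⟨hu0, hu1⟩ := hu
  have hq0 : 0 < q := by linarith
  have hpq : p + q = 1 := by linarith
  obtain rfl : Qt = binomTail n p q := funext hQt
  obtain rfl : QLin = linInterp (binomTail n p q) := funext hQLin
  obtain rfl : QLC = geomInterp (binomTail n p q) := funext hQLC
  intro x hx
  obtain ⟨j, t, ht0, ht1, rfl⟩ : ∃ (j : ℤ) (t : ℝ), 0 ≤ t ∧ t < 1 ∧ x = j + t :=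
    ⟨⌊x⌋, Int.fract x, Int.fract_nonneg x, Int.fract_lt_one x, (Int.floor_add_fract x).symm⟩
  refine linInterp_add_half_le_geomInterp (binomTail_antitone hp0.le hq0.le hpq)
    (binomTail_nonneg hp0.le hq0.le) hu0.le hu1 (tangent_le_rpow_of_root hu0 hu1 hroot) j ht0 ht1
    fun htpos => mul_binomTail_le_succ_of_le_floor hu0 hu1 hp0 hq0 hpq ?_
  rw [← hu2, ← hj2]
  exact Int.lt_add_one_iff.mp (by exact_mod_cast (by linarith : (j : ℝ) < jstar2 + 1))

theorem stmt_17 (n : ℕ) (hn : 1 ≤ n) (p : ℝ) (hp : p ∈ Set.Ioo (0 : ℝ) 1)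
    (q : ℝ) (hq : q = 1 - p)
    (Qt : ℤ → ℝ)
    (hQt : ∀ j : ℤ, Qt j = if j < 0 then 1 else
      ∑ k ∈ Finset.Icc j.toNat n, (n.choose k : ℝ) * p ^ k * q ^ (n - k))
    (QLin QLC : ℝ → ℝ)
    (hQLin : ∀ x : ℝ, QLin x = (1 - (x - ⌊x⌋)) * Qt ⌊x⌋ + (x - ⌊x⌋) * Qt (⌊x⌋ + 1))
    (hQLC : ∀ x : ℝ, QLC x = Qt ⌊x⌋ ^ (1 - (x - ⌊x⌋)) * Qt (⌊x⌋ + 1) ^ (x - ⌊x⌋))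
    (ustar : ℝ) (hu : ustar ∈ Set.Ioo (0 : ℝ) 1)
    (hroot : Real.log ((1 - ustar) / (-Real.log ustar)) - 1
      - (1 / 2) * ((1 + ustar) * Real.log ustar) / (1 - ustar) = 0)
    (huniq : ∀ u ∈ Set.Ioo (0 : ℝ) 1,
      Real.log ((1 - u) / (-Real.log u)) - 1
        - (1 / 2) * ((1 + u) * Real.log u) / (1 - u) = 0 → u = ustar)
    (ustar2 : ℝ) (hu2 : ustar2 = ustar / (1 - ustar))
    (jstar2 : ℤ) (hj2 : jstar2 = ⌊((n : ℝ) - ustar2 * q / p) / (1 + ustar2 * q / p)⌋) :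
    ∀ x : ℝ, x ≤ (jstar2 : ℝ) + 1 → QLin (x + 1 / 2) ≤ QLC x :=
  stmt_17_general n p hp q hq Qt hQt QLin QLC hQLin hQLC ustar hu hroot ustar2 hu2 jstar2 hj2
end

section
/- Let n ≥ 1, p ∈ (0,1), q := 1-p, and suppose n·q/p ≤ e^{r(α*)} - 1 where α* is the unique minimizer of r(α) = ln(1/2 - α)/(-α) on (0, 1/2). Let q_{n-1} := n p^{n-1} q + p^n and q_n := p^n be the binomial(n,p) upper-tail probabilities at n-1 and n. Then for all x ∈ [n, n + 1/2]: q_{n-1}^{n-x} q_n^{x-n+1} ≥ (n + 1/2 - x)·q_n. -/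
/-!
With `u := q_{n-1} / q_n = n q / p + 1` and `α := x - n`, the left side equals `q_n u^{-α}`, so the
claim reads `1/2 - α ≤ u^{-α}`, i.e. `log u ≤ log (1/2 - α) / (-α)` for `0 < α < 1/2` (the endpoints
are trivial). The hypothesis says that `log u` is at most the minimum of the right-hand side over
`α ∈ (0, 1/2)`.
-/

open Real Set

lemma natCast_mul_pow_pred_mul_add_pow {p : ℝ} (hp : p ≠ 0) (n : ℕ) (q : ℝ) :
    n * p ^ (n - 1) * q + p ^ n = p ^ n * (n * q / p + 1) := by
  cases n with
  | zero => simp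
  | succ k =>
    rw [Nat.add_sub_cancel, pow_succ]
    field_simp

lemma mul_rpow_sub_mul_rpow_sub_add_one {b u : ℝ} (hb : 0 < b) (hu : 0 ≤ u) (t x : ℝ) :
    (b * u) ^ (t - x) * b ^ (x - t + 1) = b * u ^ (t - x) := by
  rw [mul_rpow hb.le hu, mul_right_comm, ← rpow_add hb, show t - x + (x - t + 1) = 1 by ring,
    rpow_one]

lemma le_rpow_neg_iff_log_le_div_neg {u c α : ℝ} (hu : 0 < u) (hc : 0 < c) (hα : 0 < α) :
    c ≤ u ^ (-α) ↔ log u ≤ log c / (-α) := by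
  rw [← log_le_log_iff hc (rpow_pos_of_pos hu _), log_rpow hu, le_div_iff_of_neg (by linarith),
    mul_comm]

lemma half_sub_le_rpow_neg {u : ℝ} (hu : 0 < u)
    (hlog : ∀ α ∈ Ioo (0 : ℝ) (1 / 2), log u ≤ log (1 / 2 - α) / (-α))
    {α : ℝ} (hα : α ∈ Icc (0 : ℝ) (1 / 2)) : 1 / 2 - α ≤ u ^ (-α) := by
  obtain ⟨hα0, hα1⟩ := hα
  rcases hα0.eq_or_lt with rfl | hα0
  · norm_num
  rcases hα1.eq_or_lt with rfl | hα1
  · simpa using (rpow_pos_of_pos hu _).le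
  exact (le_rpow_neg_iff_log_le_div_neg hu (by linarith) hα0).2 (hlog α ⟨hα0, hα1⟩)

theorem stmt_18_general (n : ℕ) (p : ℝ) (hp : p ∈ Set.Ioo (0 : ℝ) 1)
    (q : ℝ) (hq : q = 1 - p)
    (αstar : ℝ)
    (hmin : ∀ α ∈ Set.Ioo (0 : ℝ) (1 / 2),
      Real.log (1 / 2 - αstar) / (-αstar) ≤ Real.log (1 / 2 - α) / (-α))
    (hbound : (n : ℝ) * q / p ≤ Real.exp (Real.log (1 / 2 - αstar) / (-αstar)) - 1) :
    ∀ x ∈ Set.Icc (n : ℝ) ((n : ℝ) + 1 / 2),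
      ((n : ℝ) * p ^ (n - 1) * q + p ^ n) ^ ((n : ℝ) - x) * (p ^ n : ℝ) ^ (x - (n : ℝ) + 1)
        ≥ ((n : ℝ) + 1 / 2 - x) * p ^ n := by
  intro x hx
  obtain ⟨hp0, hp1⟩ := hp
  have hpn : 0 < p ^ n := pow_pos hp0 n
  set u := (n : ℝ) * q / p + 1
  have hq0 : 0 ≤ q := by linarith
  have hu : 0 < u := by positivity
  have hlog : ∀ α ∈ Ioo (0 : ℝ) (1 / 2), log u ≤ log (1 / 2 - α) / (-α) := fun α hα =>
    ((log_le_iff_le_exp hu).2 (by linarith)).trans (hmin α hα)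
  have key := half_sub_le_rpow_neg hu hlog (α := x - n) ⟨by linarith [hx.1], by linarith [hx.2]⟩
  rw [neg_sub] at key
  rw [natCast_mul_pow_pred_mul_add_pow hp0.ne', mul_rpow_sub_mul_rpow_sub_add_one hpn hu.le]
  calc ((n : ℝ) + 1 / 2 - x) * p ^ n = (1 / 2 - (x - n)) * p ^ n := by ring
    _ ≤ u ^ ((n : ℝ) - x) * p ^ n := mul_le_mul_of_nonneg_right key hpn.le
    _ = p ^ n * u ^ ((n : ℝ) - x) := mul_comm _ _

theorem stmt_18 (n : ℕ) (hn : 1 ≤ n) (p : ℝ) (hp : p ∈ Set.Ioo (0 : ℝ) 1)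
    (q : ℝ) (hq : q = 1 - p)
    (αstar : ℝ) (hαs : αstar ∈ Set.Ioo (0 : ℝ) (1 / 2))
    (hmin : ∀ α ∈ Set.Ioo (0 : ℝ) (1 / 2),
      Real.log (1 / 2 - αstar) / (-αstar) ≤ Real.log (1 / 2 - α) / (-α))
    (hbound : (n : ℝ) * q / p ≤ Real.exp (Real.log (1 / 2 - αstar) / (-αstar)) - 1) :
    ∀ x ∈ Set.Icc (n : ℝ) ((n : ℝ) + 1 / 2),
      ((n : ℝ) * p ^ (n - 1) * q + p ^ n) ^ ((n : ℝ) - x) * (p ^ n : ℝ) ^ (x - (n : ℝ) + 1)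
        ≥ ((n : ℝ) + 1 / 2 - x) * p ^ n :=
  stmt_18_general n p hp q hq αstar hmin hbound
end
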